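/- arXiv:2108.12623 — 8 statements merged into one kernel-verified Lean document; each statement's English description precedes it below -/
import Mathlib

section
/- Let k and γ be real numbers with 0 < k < 1 and γ > 2, and let B > 0. Then the right-leaning beta kernel h_r(u) = B^{-1} u^{γ-1} (1-u)^{k-1} is strictly increasing (strictly monotone) on the open interval (0,1), strictly convex on (0,1), tends to 0 as u → 0 from the right, and tends to +∞ as u → 1 from the left. -/
open Set Filter MeasureTheory

private lemma beta_aux_hasDerivAt (p q : ℝ) {u : ℝ} (hu : u ∈ Set.Ioo (0:ℝ) 1) :
    HasDerivAt (fun u : ℝ => u ^ p * (1 - u) ^ q)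
      (p * u ^ (p - 1) * (1 - u) ^ q - q * u ^ p * (1 - u) ^ (q - 1)) u := by
  have hu0 : u ≠ 0 := hu.1.ne'
  have h1u : (1 : ℝ) - u ≠ 0 := by have := hu.2; intro h; linarith [sub_eq_zero.mp h]
  have h1 : HasDerivAt (fun u : ℝ => u ^ p) (p * u ^ (p - 1)) u :=
    Real.hasDerivAt_rpow_const (Or.inl hu0)
  have h2 : HasDerivAt (fun u : ℝ => (1 : ℝ) - u) (-1) u := by
    simpa using (hasDerivAt_id u).const_sub 1
  have h3 : HasDerivAt (fun u : ℝ => (1 - u) ^ q) (q * (1 - u) ^ (q - 1) * (-1)) u :=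
    (Real.hasDerivAt_rpow_const (Or.inl h1u)).comp u h2
  have := h1.mul h3
  exact this.congr_deriv (by ring)

/-- Properties of the right-leaning beta kernel `h_r(u) = B⁻¹ u^(γ-1) (1-u)^(k-1)`:
strictly increasing on (0,1), strictly convex on (0,1), tends to 0 at 0⁺ and to +∞ at 1⁻. -/
theorem right_beta_kernel_properties (k γ B : ℝ) (hk0 : 0 < k) (hk1 : k < 1)
    (hγ : 2 < γ) (hB : 0 < B) :
    StrictMonoOn (fun u : ℝ => B⁻¹ * u ^ (γ - 1) * (1 - u) ^ (k - 1)) (Set.Ioo 0 1) ∧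
    StrictConvexOn ℝ (Set.Ioo (0 : ℝ) 1)
      (fun u : ℝ => B⁻¹ * u ^ (γ - 1) * (1 - u) ^ (k - 1)) ∧
    Filter.Tendsto (fun u : ℝ => B⁻¹ * u ^ (γ - 1) * (1 - u) ^ (k - 1))
      (nhdsWithin 0 (Set.Ioi 0)) (nhds 0) ∧
    Filter.Tendsto (fun u : ℝ => B⁻¹ * u ^ (γ - 1) * (1 - u) ^ (k - 1))
      (nhdsWithin 1 (Set.Iio 1)) Filter.atTop := by
  set p : ℝ := γ - 1 with hp_def
  set q : ℝ := k - 1 with hq_def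
  have hp1 : 1 < p := by simp [hp_def]; linarith
  have hq0 : q < 0 := by simp [hq_def]; linarith
  have hq1 : -1 < q := by simp [hq_def]; linarith
  have hC : 0 < B⁻¹ := inv_pos.mpr hB
  set C : ℝ := B⁻¹ with hC_def
  have hfun : (fun u : ℝ => B⁻¹ * u ^ (γ - 1) * (1 - u) ^ (k - 1))
      = fun u : ℝ => C * (u ^ p * (1 - u) ^ q) := by
    funext u; rw [hC_def, hp_def, hq_def]; ring
  rw [hfun]
  set F : ℝ → ℝ := fun u => C * (u ^ p * (1 - u) ^ q) with hF_def
  -- derivative of F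
  set G : ℝ → ℝ := fun u =>
    C * (p * u ^ (p - 1) * (1 - u) ^ q - q * u ^ p * (1 - u) ^ (q - 1)) with hG_def
  have hF' : ∀ u ∈ Set.Ioo (0:ℝ) 1, HasDerivAt F (G u) u := fun u hu =>
    (beta_aux_hasDerivAt p q hu).const_mul C
  have hcont : ContinuousOn F (Set.Ioo (0:ℝ) 1) := fun u hu =>
    (hF' u hu).continuousAt.continuousWithinAt
  have hderivF : ∀ u ∈ Set.Ioo (0:ℝ) 1, deriv F u = G u := fun u hu => (hF' u hu).deriv
  -- positivity facts
  have hpos : ∀ u ∈ Set.Ioo (0:ℝ) 1, ∀ r : ℝ, 0 < u ^ r ∧ 0 < (1 - u) ^ r := by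
    intro u hu r
    exact ⟨Real.rpow_pos_of_pos hu.1 r, Real.rpow_pos_of_pos (by linarith [hu.2]) r⟩
  -- StrictMonoOn
  have hmono : StrictMonoOn F (Set.Ioo 0 1) := by
    apply strictMonoOn_of_deriv_pos (convex_Ioo 0 1) hcont
    intro x hx
    rw [interior_Ioo] at hx
    rw [hderivF x hx, hG_def]
    have h1 := (hpos x hx (p - 1)).1
    have h2 := (hpos x hx q).2
    have h3 := (hpos x hx p).1
    have h4 := (hpos x hx (q - 1)).2
    have : 0 < p * x ^ (p - 1) * (1 - x) ^ q - q * x ^ p * (1 - x) ^ (q - 1) := by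
      nlinarith [mul_pos (mul_pos (by linarith : (0:ℝ) < p) h1) h2,
        mul_pos (mul_pos (by linarith : (0:ℝ) < -q) h3) h4]
    positivity
  refine ⟨hmono, ?_, ?_, ?_⟩
  · -- StrictConvexOn
    apply strictConvexOn_of_deriv2_pos (convex_Ioo 0 1) hcont
    intro x hx
    rw [interior_Ioo] at hx
    have hGderiv : HasDerivAt G
        (C * (p * ((p - 1) * x ^ (p - 1 - 1) * (1 - x) ^ q
              - q * x ^ (p - 1) * (1 - x) ^ (q - 1))
            - q * (p * x ^ (p - 1) * (1 - x) ^ (q - 1)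
              - (q - 1) * x ^ p * (1 - x) ^ (q - 1 - 1)))) x := by
      have h1 := (beta_aux_hasDerivAt (p - 1) q hx).const_mul p
      have h2 := (beta_aux_hasDerivAt p (q - 1) hx).const_mul q
      have := (h1.sub h2).const_mul C
      have heq : (fun y : ℝ => C * (p * (y ^ (p - 1) * (1 - y) ^ q)
          - q * (y ^ p * (1 - y) ^ (q - 1)))) = G := by
        funext y; rw [hG_def]; ring
      rw [← heq]
      exact this
    have hderiv2 : deriv^[2] F x = deriv G x := by
      have heq : deriv F =ᶠ[nhds x] G :=
        Filter.eventuallyEq_of_mem (isOpen_Ioo.mem_nhds hx) hderivF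
      simp only [Function.iterate_succ, Function.iterate_zero, Function.comp_apply, id_eq]
      exact heq.deriv_eq
    rw [hderiv2, hGderiv.deriv]
    have h1 := (hpos x hx (p - 1 - 1)).1
    have h2 := (hpos x hx q).2
    have h3 := (hpos x hx (p - 1)).1
    have h4 := (hpos x hx (q - 1)).2
    have h5 := (hpos x hx p).1
    have h6 := (hpos x hx (q - 1 - 1)).2
    have : 0 < p * ((p - 1) * x ^ (p - 1 - 1) * (1 - x) ^ q
              - q * x ^ (p - 1) * (1 - x) ^ (q - 1))
            - q * (p * x ^ (p - 1) * (1 - x) ^ (q - 1)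
              - (q - 1) * x ^ p * (1 - x) ^ (q - 1 - 1)) := by
      nlinarith [mul_pos (mul_pos (mul_pos (by linarith : (0:ℝ) < p)
          (by linarith : (0:ℝ) < p - 1)) h1) h2,
        mul_pos (mul_pos (mul_pos (by linarith : (0:ℝ) < p)
          (by linarith : (0:ℝ) < -q)) h3) h4,
        mul_pos (mul_pos (mul_pos (by linarith : (0:ℝ) < -q)
          (by linarith : (0:ℝ) < 1 - q)) h5) h6]
    positivity
  · -- limit at 0⁺
    have hca : ContinuousAt F 0 := by
      apply ContinuousAt.mul continuousAt_const
      apply ContinuousAt.mul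
      · exact Real.continuousAt_rpow_const 0 p (Or.inr (by linarith))
      · exact (continuousAt_const.sub continuousAt_id).rpow_const
          (Or.inl (by norm_num))
    have hval : F 0 = 0 := by
      simp [hF_def, Real.zero_rpow (by linarith : p ≠ 0)]
    have h := hca.tendsto.mono_left (nhdsWithin_le_nhds (s := Set.Ioi (0:ℝ)))
    rwa [hval] at h
  · -- limit at 1⁻
    have h1 : Tendsto (fun u : ℝ => 1 - u) (nhdsWithin 1 (Set.Iio 1))
        (nhdsWithin 0 (Set.Ioi 0)) := by
      apply tendsto_nhdsWithin_of_tendsto_nhds_of_eventually_within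
      · have : Tendsto (fun u : ℝ => 1 - u) (nhds 1) (nhds (1 - 1)) :=
          (continuous_const.sub continuous_id).tendsto 1
        simpa using this.mono_left nhdsWithin_le_nhds
      · filter_upwards [self_mem_nhdsWithin] with u hu
        exact sub_pos.mpr (Set.mem_Iio.mp hu)
    have h2 : Tendsto (fun x : ℝ => x ^ q) (nhdsWithin 0 (Set.Ioi 0)) atTop := by
      have h3 : Tendsto (fun x : ℝ => x ^ (-q)) (nhdsWithin 0 (Set.Ioi 0))
          (nhdsWithin 0 (Set.Ioi 0)) := by
        apply tendsto_nhdsWithin_of_tendsto_nhds_of_eventually_within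
        · have := (Real.continuousAt_rpow_const 0 (-q) (Or.inr (by linarith))).tendsto
          rw [Real.zero_rpow (by linarith : -q ≠ 0)] at this
          exact this.mono_left nhdsWithin_le_nhds
        · filter_upwards [self_mem_nhdsWithin] with x hx
          exact Real.rpow_pos_of_pos hx (-q)
      have h4 := h3.inv_tendsto_nhdsGT_zero
      apply h4.congr'
      filter_upwards [self_mem_nhdsWithin] with x hx
      rw [Pi.inv_apply, ← Real.rpow_neg (le_of_lt hx), neg_neg]
    have h5 : Tendsto (fun u : ℝ => (1 - u) ^ q) (nhdsWithin 1 (Set.Iio 1)) atTop :=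
      h2.comp h1
    have h6 : Tendsto (fun u : ℝ => C * u ^ p) (nhdsWithin 1 (Set.Iio 1)) (nhds (C * 1)) := by
      apply Tendsto.mono_left _ nhdsWithin_le_nhds
      have := (Real.continuousAt_rpow_const 1 p (Or.inl one_ne_zero)).tendsto
      rw [Real.one_rpow] at this
      exact tendsto_const_nhds.mul this
    have hCpos : (0:ℝ) < C * 1 := by simpa using hC
    have := Filter.Tendsto.pos_mul_atTop hCpos h6 h5
    apply this.congr
    intro u
    rw [hF_def]; ring
end

section
/- Fix γ_l, γ_r > 2, k_l, k_r ∈ (0,1), B_l, B_r > 0, and mixing weights π_l, π_r ∈ (0,1) with π_l + π_r < 1. Then the reciprocal assessor b(u) = 1 + (π_l B_l^{-1} u^{k_l-1}(1-u)^{γ_l-1} + π_r B_r^{-1} u^{γ_r-1}(1-u)^{k_r-1}) / (1 - π_l - π_r) is strictly convex on the open interval (0,1), and b(u) tends to +∞ both as u → 0 from the right and as u → 1 from the left. -/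
open Set Filter Real Topology

private noncomputable def gg (a b : ℝ) : ℝ → ℝ := fun u => u ^ a * (1 - u) ^ b

private lemma gg_pos {a b x : ℝ} (hx : x ∈ Set.Ioo (0:ℝ) 1) : 0 < gg a b x :=
  mul_pos (Real.rpow_pos_of_pos hx.1 _) (Real.rpow_pos_of_pos (by linarith [hx.2]) _)

private lemma gg_hasDerivAt (a b : ℝ) {x : ℝ} (hx : x ∈ Set.Ioo (0:ℝ) 1) :
    HasDerivAt (gg a b) (a * gg (a-1) b x - b * gg a (b-1) x) x := by
  obtain ⟨hx0, hx1⟩ := hx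
  have h1x : (0:ℝ) < 1 - x := by linarith
  have h1 : HasDerivAt (fun u : ℝ => u ^ a) (a * x ^ (a-1)) x :=
    Real.hasDerivAt_rpow_const (Or.inl hx0.ne')
  have h2 : HasDerivAt (fun u : ℝ => (1 - u) ^ b) (b * (1-x) ^ (b-1) * (-1)) x := by
    have hinner : HasDerivAt (fun u : ℝ => 1 - u) (-1) x := by
      simpa using (hasDerivAt_id' x).const_sub (1:ℝ)
    exact (Real.hasDerivAt_rpow_const (x := 1 - x) (Or.inl h1x.ne')).comp x hinner
  have := h1.mul h2
  simp only [gg]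
  exact this.congr_deriv (by ring)

private lemma gg_deriv2 (a b : ℝ) {x : ℝ} (hx : x ∈ Set.Ioo (0:ℝ) 1) :
    HasDerivAt (fun u => a * gg (a-1) b u - b * gg a (b-1) u)
      (a*(a-1) * gg (a-2) b x - 2*a*b * gg (a-1) (b-1) x + b*(b-1) * gg a (b-2) x) x := by
  have h1 := (gg_hasDerivAt (a-1) b hx).const_mul a
  have h2 := (gg_hasDerivAt a (b-1) hx).const_mul b
  have e1 : a - 1 - 1 = a - 2 := by ring
  have e2 : b - 1 - 1 = b - 2 := by ring
  rw [e1] at h1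
  rw [e2] at h2
  exact (h1.sub h2).congr_deriv (by ring)

private lemma tendsto_rpow_neg_zero {c : ℝ} (hc : c < 0) :
    Tendsto (fun u : ℝ => u ^ c) (𝓝[>] (0:ℝ)) atTop := by
  have h := (tendsto_rpow_atTop (y := -c) (by linarith)).comp tendsto_inv_nhdsGT_zero
  apply h.congr'
  filter_upwards [self_mem_nhdsWithin] with u hu
  have hu0 : (0:ℝ) < u := hu
  simp only [Function.comp]
  rw [Real.inv_rpow hu0.le, ← Real.rpow_neg hu0.le, neg_neg]

private lemma tendsto_rpow_pos_zero {c : ℝ} (hc : 0 < c) :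
    Tendsto (fun u : ℝ => u ^ c) (𝓝[>] (0:ℝ)) (𝓝 0) := by
  have h := (Real.continuousAt_rpow_const 0 c (Or.inr hc.le)).tendsto
  rw [Real.zero_rpow hc.ne'] at h
  exact h.mono_left nhdsWithin_le_nhds

private lemma tendsto_one_sub_rpow {b : ℝ} :
    Tendsto (fun u : ℝ => (1 - u) ^ b) (𝓝[>] (0:ℝ)) (𝓝 1) := by
  have hc : ContinuousAt (fun u : ℝ => (1 - u) ^ b) 0 := by
    have h1 : ContinuousAt (fun u : ℝ => 1 - u) 0 := by fun_prop
    have h2 : ContinuousAt (fun v : ℝ => v ^ b) ((fun u : ℝ => 1 - u) 0) := by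
      simp only [sub_zero]
      exact Real.continuousAt_rpow_const 1 b (Or.inl one_ne_zero)
    exact h2.comp h1
  have := hc.tendsto
  simp only [sub_zero, Real.one_rpow] at this
  exact this.mono_left nhdsWithin_le_nhds

private lemma tendsto_one_sub_map :
    Tendsto (fun u : ℝ => 1 - u) (𝓝[<] (1:ℝ)) (𝓝[>] (0:ℝ)) := by
  apply tendsto_nhdsWithin_of_tendsto_nhds_of_eventually_within
  · have : Tendsto (fun u : ℝ => 1 - u) (𝓝 1) (𝓝 0) := by
      have h : Continuous (fun u : ℝ => 1 - u) := by fun_prop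
      simpa using h.tendsto 1
    exact this.mono_left nhdsWithin_le_nhds
  · filter_upwards [self_mem_nhdsWithin] with u hu
    have : u < 1 := hu
    simp only [Set.mem_Ioi]
    linarith

/-- The reciprocal assessor of the working beta-mixture model is strictly convex on (0,1)
and tends to +∞ at both endpoints. -/
theorem reciprocal_assessor_convex_and_divergent
    (γl γr kl kr Bl Br pl pr : ℝ)
    (hγl : 2 < γl) (hγr : 2 < γr)
    (hkl : kl ∈ Set.Ioo (0 : ℝ) 1) (hkr : kr ∈ Set.Ioo (0 : ℝ) 1)
    (hBl : 0 < Bl) (hBr : 0 < Br)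
    (hpl : pl ∈ Set.Ioo (0 : ℝ) 1) (hpr : pr ∈ Set.Ioo (0 : ℝ) 1)
    (hsum : pl + pr < 1) :
    StrictConvexOn ℝ (Set.Ioo (0 : ℝ) 1)
      (fun u : ℝ => 1 + (pl * Bl⁻¹ * u ^ (kl - 1) * (1 - u) ^ (γl - 1)
        + pr * Br⁻¹ * u ^ (γr - 1) * (1 - u) ^ (kr - 1)) / (1 - pl - pr)) ∧
    Filter.Tendsto
      (fun u : ℝ => 1 + (pl * Bl⁻¹ * u ^ (kl - 1) * (1 - u) ^ (γl - 1)
        + pr * Br⁻¹ * u ^ (γr - 1) * (1 - u) ^ (kr - 1)) / (1 - pl - pr))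
      (nhdsWithin 0 (Set.Ioi 0)) Filter.atTop ∧
    Filter.Tendsto
      (fun u : ℝ => 1 + (pl * Bl⁻¹ * u ^ (kl - 1) * (1 - u) ^ (γl - 1)
        + pr * Br⁻¹ * u ^ (γr - 1) * (1 - u) ^ (kr - 1)) / (1 - pl - pr))
      (nhdsWithin 1 (Set.Iio 1)) Filter.atTop := by
  obtain ⟨hkl0, hkl1⟩ := hkl
  obtain ⟨hkr0, hkr1⟩ := hkr
  have hd : 0 < 1 - pl - pr := by linarith
  set C1 : ℝ := pl * Bl⁻¹ with hC1def
  set C2 : ℝ := pr * Br⁻¹ with hC2def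
  have hC1 : 0 < C1 := mul_pos hpl.1 (inv_pos.mpr hBl)
  have hC2 : 0 < C2 := mul_pos hpr.1 (inv_pos.mpr hBr)
  set D : ℝ := (1 - pl - pr)⁻¹ with hDdef
  have hD : 0 < D := inv_pos.mpr hd
  set a1 : ℝ := kl - 1
  set b1 : ℝ := γl - 1
  set a2 : ℝ := γr - 1
  set b2 : ℝ := kr - 1
  set F : ℝ → ℝ := fun u => 1 + (C1 * gg a1 b1 u + C2 * gg a2 b2 u) * D with hFdef
  have hFeq : (fun u : ℝ => 1 + (pl * Bl⁻¹ * u ^ (kl - 1) * (1 - u) ^ (γl - 1)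
        + pr * Br⁻¹ * u ^ (γr - 1) * (1 - u) ^ (kr - 1)) / (1 - pl - pr)) = F := by
    funext u
    simp only [hFdef, gg, hC1def, hC2def, hDdef, div_eq_mul_inv]
    ring
  rw [hFeq]
  -- derivative data
  have hF' : ∀ x ∈ Set.Ioo (0:ℝ) 1, HasDerivAt F
      ((C1 * (a1 * gg (a1-1) b1 x - b1 * gg a1 (b1-1) x)
        + C2 * (a2 * gg (a2-1) b2 x - b2 * gg a2 (b2-1) x)) * D) x := by
    intro x hx
    have h1 := ((gg_hasDerivAt a1 b1 hx).const_mul C1).add ((gg_hasDerivAt a2 b2 hx).const_mul C2)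
    have := (h1.mul_const D).const_add 1
    exact this
  set F1 : ℝ → ℝ := fun u => (C1 * (a1 * gg (a1-1) b1 u - b1 * gg a1 (b1-1) u)
        + C2 * (a2 * gg (a2-1) b2 u - b2 * gg a2 (b2-1) u)) * D with hF1def
  have hF1' : ∀ x ∈ Set.Ioo (0:ℝ) 1, HasDerivAt F1
      ((C1 * (a1*(a1-1) * gg (a1-2) b1 x - 2*a1*b1 * gg (a1-1) (b1-1) x + b1*(b1-1) * gg a1 (b1-2) x)
        + C2 * (a2*(a2-1) * gg (a2-2) b2 x - 2*a2*b2 * gg (a2-1) (b2-1) x + b2*(b2-1) * gg a2 (b2-2) x)) * D) x := by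
    intro x hx
    exact (((gg_deriv2 a1 b1 hx).const_mul C1).add ((gg_deriv2 a2 b2 hx).const_mul C2)).mul_const D
  constructor
  · -- strict convexity
    apply strictConvexOn_of_deriv2_pos (convex_Ioo 0 1)
    · intro x hx
      exact (hF' x hx).continuousAt.continuousWithinAt
    · intro x hx
      rw [interior_Ioo] at hx
      have hmem : Set.Ioo (0:ℝ) 1 ∈ 𝓝 x := isOpen_Ioo.mem_nhds hx
      have hev : deriv F =ᶠ[𝓝 x] F1 := by
        filter_upwards [hmem] with y hy
        exact (hF' y hy).deriv
      have h2 : deriv^[2] F x = deriv F1 x := by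
        simp only [Function.iterate_succ, Function.iterate_zero, Function.comp_apply, id]
        exact hev.deriv_eq
      rw [h2, (hF1' x hx).deriv]
      have ha1 : 0 < a1 * (a1 - 1) := mul_pos_of_neg_of_neg (by simp only [a1]; linarith)
        (by simp only [a1]; linarith)
      have hb1 : 0 < b1 * (b1 - 1) := mul_pos (by simp only [b1]; linarith)
        (by simp only [b1]; linarith)
      have hab1 : 0 < -(2*a1*b1) := by
        have : a1 < 0 := by simp only [a1]; linarith
        have hb : 0 < b1 := by simp only [b1]; linarith
        nlinarith
      have ha2 : 0 < a2 * (a2 - 1) := mul_pos (by simp only [a2]; linarith)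
        (by simp only [a2]; linarith)
      have hb2 : 0 < b2 * (b2 - 1) := mul_pos_of_neg_of_neg (by simp only [b2]; linarith)
        (by simp only [b2]; linarith)
      have hab2 : 0 < -(2*a2*b2) := by
        have : b2 < 0 := by simp only [b2]; linarith
        have ha : 0 < a2 := by simp only [a2]; linarith
        nlinarith
      have t1 : 0 < a1*(a1-1) * gg (a1-2) b1 x - 2*a1*b1 * gg (a1-1) (b1-1) x
          + b1*(b1-1) * gg a1 (b1-2) x := by
        have p1 := mul_pos ha1 (gg_pos (a := a1-2) (b := b1) hx)
        have p2 := mul_pos hab1 (gg_pos (a := a1-1) (b := b1-1) hx)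
        have p3 := mul_pos hb1 (gg_pos (a := a1) (b := b1-2) hx)
        nlinarith
      have t2 : 0 < a2*(a2-1) * gg (a2-2) b2 x - 2*a2*b2 * gg (a2-1) (b2-1) x
          + b2*(b2-1) * gg a2 (b2-2) x := by
        have p1 := mul_pos ha2 (gg_pos (a := a2-2) (b := b2) hx)
        have p2 := mul_pos hab2 (gg_pos (a := a2-1) (b := b2-1) hx)
        have p3 := mul_pos hb2 (gg_pos (a := a2) (b := b2-2) hx)
        nlinarith
      positivity
  constructor
  · -- u → 0⁺
    have hT1 : Tendsto (fun u : ℝ => gg a1 b1 u) (𝓝[>] (0:ℝ)) atTop := by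
      have hA : Tendsto (fun u : ℝ => u ^ a1) (𝓝[>] (0:ℝ)) atTop :=
        tendsto_rpow_neg_zero (by simp only [a1]; linarith)
      exact hA.atTop_mul_pos one_pos tendsto_one_sub_rpow
    have hT2 : Tendsto (fun u : ℝ => gg a2 b2 u) (𝓝[>] (0:ℝ)) (𝓝 0) := by
      have hA : Tendsto (fun u : ℝ => u ^ a2) (𝓝[>] (0:ℝ)) (𝓝 0) :=
        tendsto_rpow_pos_zero (by simp only [a2]; linarith)
      have := hA.mul (tendsto_one_sub_rpow (b := b2))
      simpa [gg] using this
    have hsum' : Tendsto (fun u : ℝ => C1 * gg a1 b1 u + C2 * gg a2 b2 u) (𝓝[>] (0:ℝ)) atTop :=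
      (hT1.const_mul_atTop hC1).atTop_add (hT2.const_mul C2)
    have := (hsum'.atTop_mul_const hD)
    exact tendsto_atTop_add_const_left _ 1 this
  · -- u → 1⁻
    have hT2 : Tendsto (fun u : ℝ => gg a2 b2 u) (𝓝[<] (1:ℝ)) atTop := by
      have hB : Tendsto (fun u : ℝ => (1 - u) ^ b2) (𝓝[<] (1:ℝ)) atTop :=
        (tendsto_rpow_neg_zero (by simp only [b2]; linarith)).comp tendsto_one_sub_map
      have hA : Tendsto (fun u : ℝ => u ^ a2) (𝓝[<] (1:ℝ)) (𝓝 1) := by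
        have hc := (Real.continuousAt_rpow_const 1 a2 (Or.inl one_ne_zero)).tendsto
        rw [Real.one_rpow] at hc
        exact hc.mono_left nhdsWithin_le_nhds
      exact hA.pos_mul_atTop one_pos hB
    have hT1 : Tendsto (fun u : ℝ => gg a1 b1 u) (𝓝[<] (1:ℝ)) (𝓝 0) := by
      have hA : Tendsto (fun u : ℝ => u ^ a1) (𝓝[<] (1:ℝ)) (𝓝 1) := by
        have hc := (Real.continuousAt_rpow_const 1 a1 (Or.inl one_ne_zero)).tendsto
        rw [Real.one_rpow] at hc
        exact hc.mono_left nhdsWithin_le_nhds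
      have hB : Tendsto (fun u : ℝ => (1 - u) ^ b1) (𝓝[<] (1:ℝ)) (𝓝 0) :=
        (tendsto_rpow_pos_zero (by simp only [b1]; linarith)).comp tendsto_one_sub_map
      have := hA.mul hB
      simpa [gg] using this
    have hsum' : Tendsto (fun u : ℝ => C1 * gg a1 b1 u + C2 * gg a2 b2 u) (𝓝[<] (1:ℝ)) atTop :=
      Filter.Tendsto.add_atTop (hT1.const_mul C1) (hT2.const_mul_atTop hC2)
    have := (hsum'.atTop_mul_const hD)
    exact tendsto_atTop_add_const_left _ 1 this
end

section
/- Fix γ_l, γ_r > 2, k_l, k_r ∈ (0,1), B_l, B_r > 0, and mixing weights π_l, π_r ∈ (0,1) with π_l + π_r < 1, and let b be the reciprocal assessor b(u) = 1 + (π_l B_l^{-1} u^{k_l-1}(1-u)^{γ_l-1} + π_r B_r^{-1} u^{γ_r-1}(1-u)^{k_r-1}) / (1 - π_l - π_r) on (0,1). Then there exists a unique point u* ∈ (0,1) such that b(u*) < b(u) for every u ∈ (0,1) with u ≠ u*. -/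
open Set Real Filter

private lemma aux_rpow_blowup {a : ℝ} (ha : a < 0) :
    Tendsto (fun u : ℝ => u ^ a) (nhdsWithin 0 (Set.Ioi 0)) atTop := by
  have h1 : Tendsto (fun u : ℝ => (u⁻¹) ^ (-a)) (nhdsWithin 0 (Set.Ioi 0)) atTop :=
    (tendsto_rpow_atTop (by linarith)).comp tendsto_inv_nhdsGT_zero
  refine h1.congr' ?_
  filter_upwards [self_mem_nhdsWithin] with u hu
  have hu0 : (0:ℝ) < u := hu
  rw [Real.inv_rpow hu0.le, Real.rpow_neg hu0.le, inv_inv]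

private lemma aux_term_hasDerivAt (c a b : ℝ) {u : ℝ} (hu : u ∈ Set.Ioo (0:ℝ) 1) :
    HasDerivAt (fun x : ℝ => c * x ^ a * (1 - x) ^ b)
      ((c * a) * u ^ (a - 1) * (1 - u) ^ b + (-(c * b)) * u ^ a * (1 - u) ^ (b - 1)) u := by
  have h0 : u ≠ 0 := ne_of_gt hu.1
  have h1 : (1:ℝ) - u ≠ 0 := by have := hu.2; intro h; linarith [(sub_eq_zero.mp h)]
  have hx : HasDerivAt (fun x : ℝ => x ^ a) (a * u ^ (a - 1)) u :=
    Real.hasDerivAt_rpow_const (Or.inl h0)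
  have hy : HasDerivAt (fun x : ℝ => (1 - x)) (-1 : ℝ) u := by
    simpa using (hasDerivAt_id u).const_sub 1
  have hz : HasDerivAt (fun x : ℝ => (1 - x) ^ b) ((-1) * b * (1 - u) ^ (b - 1)) u :=
    hy.rpow_const (Or.inl h1)
  have heq : (c * a) * u ^ (a - 1) * (1 - u) ^ b + (-(c * b)) * u ^ a * (1 - u) ^ (b - 1)
      = c * (a * u ^ (a - 1)) * (1 - u) ^ b + c * u ^ a * ((-1) * b * (1 - u) ^ (b - 1)) := by
    ring
  rw [heq]
  exact (hx.const_mul c).mul hz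

private lemma mix_strict_min (c₁ c₂ a₁ b₁ a₂ b₂ : ℝ)
    (hc₁ : 0 < c₁) (hc₂ : 0 < c₂)
    (ha₁n : -1 < a₁) (ha₁0 : a₁ < 0) (hb₁ : 1 < b₁)
    (ha₂ : 1 < a₂) (hb₂n : -1 < b₂) (hb₂0 : b₂ < 0) :
    ∃ m ∈ Set.Ioo (0:ℝ) 1, ∀ u ∈ Set.Ioo (0:ℝ) 1, u ≠ m →
      c₁ * m ^ a₁ * (1 - m) ^ b₁ + c₂ * m ^ a₂ * (1 - m) ^ b₂
      < c₁ * u ^ a₁ * (1 - u) ^ b₁ + c₂ * u ^ a₂ * (1 - u) ^ b₂ := by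
  set f : ℝ → ℝ := fun u => c₁ * u ^ a₁ * (1 - u) ^ b₁ + c₂ * u ^ a₂ * (1 - u) ^ b₂ with hfdef
  set f' : ℝ → ℝ := fun u =>
      ((c₁ * a₁) * u ^ (a₁ - 1) * (1 - u) ^ b₁ + (-(c₁ * b₁)) * u ^ a₁ * (1 - u) ^ (b₁ - 1))
    + ((c₂ * a₂) * u ^ (a₂ - 1) * (1 - u) ^ b₂ + (-(c₂ * b₂)) * u ^ a₂ * (1 - u) ^ (b₂ - 1))
    with hf'def
  set f'' : ℝ → ℝ := fun u =>
      (((c₁ * a₁) * (a₁ - 1)) * u ^ (a₁ - 1 - 1) * (1 - u) ^ b₁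
        + (-((c₁ * a₁) * b₁)) * u ^ (a₁ - 1) * (1 - u) ^ (b₁ - 1)
      + (((-(c₁ * b₁)) * a₁) * u ^ (a₁ - 1) * (1 - u) ^ (b₁ - 1)
        + (-((-(c₁ * b₁)) * (b₁ - 1))) * u ^ a₁ * (1 - u) ^ (b₁ - 1 - 1)))
    + (((c₂ * a₂) * (a₂ - 1)) * u ^ (a₂ - 1 - 1) * (1 - u) ^ b₂
        + (-((c₂ * a₂) * b₂)) * u ^ (a₂ - 1) * (1 - u) ^ (b₂ - 1)
      + (((-(c₂ * b₂)) * a₂) * u ^ (a₂ - 1) * (1 - u) ^ (b₂ - 1)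
        + (-((-(c₂ * b₂)) * (b₂ - 1))) * u ^ a₂ * (1 - u) ^ (b₂ - 1 - 1)))
    with hf''def
  suffices h : ∃ m ∈ Set.Ioo (0:ℝ) 1, ∀ u ∈ Set.Ioo (0:ℝ) 1, u ≠ m → f m < f u by
    obtain ⟨m, hm, h'⟩ := h
    exact ⟨m, hm, h'⟩
  have hf' : ∀ u ∈ Set.Ioo (0:ℝ) 1, HasDerivAt f (f' u) u := fun u hu =>
    (aux_term_hasDerivAt c₁ a₁ b₁ hu).add (aux_term_hasDerivAt c₂ a₂ b₂ hu)
  have hf'' : ∀ u ∈ Set.Ioo (0:ℝ) 1, HasDerivAt f' (f'' u) u := fun u hu =>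
    (((aux_term_hasDerivAt (c₁ * a₁) (a₁ - 1) b₁ hu).add
      (aux_term_hasDerivAt (-(c₁ * b₁)) a₁ (b₁ - 1) hu)).add
     ((aux_term_hasDerivAt (c₂ * a₂) (a₂ - 1) b₂ hu).add
      (aux_term_hasDerivAt (-(c₂ * b₂)) a₂ (b₂ - 1) hu)))
  have hfc : ContinuousOn f (Set.Ioo (0:ℝ) 1) := fun u hu =>
    (hf' u hu).continuousAt.continuousWithinAt
  -- positivity of second derivative
  have hpos : ∀ u ∈ Set.Ioo (0:ℝ) 1, 0 < f'' u := by
    intro u hu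
    have hu0 : (0:ℝ) < u := hu.1
    have hu1 : (0:ℝ) < 1 - u := by linarith [hu.2]
    have key : ∀ k e e' : ℝ, 0 < k → 0 < k * u ^ e * (1 - u) ^ e' := fun k e e' hk =>
      mul_pos (mul_pos hk (Real.rpow_pos_of_pos hu0 e)) (Real.rpow_pos_of_pos hu1 e')
    have k1 : 0 < (c₁ * a₁) * (a₁ - 1) :=
      mul_pos_of_neg_of_neg (mul_neg_of_pos_of_neg hc₁ ha₁0) (by linarith)
    have k2 : 0 < -((c₁ * a₁) * b₁) := by
      have := mul_neg_of_neg_of_pos (mul_neg_of_pos_of_neg hc₁ ha₁0) (show (0:ℝ) < b₁ by linarith)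
      linarith
    have k3 : 0 < (-(c₁ * b₁)) * a₁ := by
      have h := mul_pos hc₁ (show (0:ℝ) < b₁ by linarith)
      exact mul_pos_of_neg_of_neg (by linarith) ha₁0
    have k4 : 0 < -((-(c₁ * b₁)) * (b₁ - 1)) := by
      have h := mul_pos hc₁ (show (0:ℝ) < b₁ by linarith)
      have := mul_neg_of_neg_of_pos (show -(c₁ * b₁) < 0 by linarith)
        (show (0:ℝ) < b₁ - 1 by linarith)
      linarith
    have k5 : 0 < (c₂ * a₂) * (a₂ - 1) :=
      mul_pos (mul_pos hc₂ (by linarith)) (by linarith)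
    have k6 : 0 < -((c₂ * a₂) * b₂) := by
      have := mul_neg_of_pos_of_neg (mul_pos hc₂ (show (0:ℝ) < a₂ by linarith)) hb₂0
      linarith
    have k7 : 0 < (-(c₂ * b₂)) * a₂ := by
      have h := mul_neg_of_pos_of_neg hc₂ hb₂0
      exact mul_pos (by linarith) (by linarith)
    have k8 : 0 < -((-(c₂ * b₂)) * (b₂ - 1)) := by
      have h := mul_neg_of_pos_of_neg hc₂ hb₂0
      have := mul_neg_of_pos_of_neg (show (0:ℝ) < -(c₂ * b₂) by linarith)
        (show b₂ - 1 < 0 by linarith)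
      linarith
    have t1 := key _ (a₁ - 1 - 1) b₁ k1
    have t2 := key _ (a₁ - 1) (b₁ - 1) k2
    have t3 := key _ (a₁ - 1) (b₁ - 1) k3
    have t4 := key _ a₁ (b₁ - 1 - 1) k4
    have t5 := key _ (a₂ - 1 - 1) b₂ k5
    have t6 := key _ (a₂ - 1) (b₂ - 1) k6
    have t7 := key _ (a₂ - 1) (b₂ - 1) k7
    have t8 := key _ a₂ (b₂ - 1 - 1) k8
    show (0:ℝ) <
      (((c₁ * a₁) * (a₁ - 1)) * u ^ (a₁ - 1 - 1) * (1 - u) ^ b₁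
        + (-((c₁ * a₁) * b₁)) * u ^ (a₁ - 1) * (1 - u) ^ (b₁ - 1)
      + (((-(c₁ * b₁)) * a₁) * u ^ (a₁ - 1) * (1 - u) ^ (b₁ - 1)
        + (-((-(c₁ * b₁)) * (b₁ - 1))) * u ^ a₁ * (1 - u) ^ (b₁ - 1 - 1)))
    + (((c₂ * a₂) * (a₂ - 1)) * u ^ (a₂ - 1 - 1) * (1 - u) ^ b₂
        + (-((c₂ * a₂) * b₂)) * u ^ (a₂ - 1) * (1 - u) ^ (b₂ - 1)
      + (((-(c₂ * b₂)) * a₂) * u ^ (a₂ - 1) * (1 - u) ^ (b₂ - 1)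
        + (-((-(c₂ * b₂)) * (b₂ - 1))) * u ^ a₂ * (1 - u) ^ (b₂ - 1 - 1)))
    linarith
  -- strict convexity
  have hconv : StrictConvexOn ℝ (Set.Ioo (0:ℝ) 1) f := by
    apply strictConvexOn_of_deriv2_pos (convex_Ioo 0 1) hfc
    intro x hx
    rw [interior_Ioo] at hx
    have heq : deriv f =ᶠ[nhds x] f' := by
      filter_upwards [isOpen_Ioo.mem_nhds hx] with y hy
      exact (hf' y hy).deriv
    have h2 : deriv^[2] f x = deriv (deriv f) x := rfl
    rw [h2, heq.deriv_eq, (hf'' x hx).deriv]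
    exact hpos x hx
  -- blow up at 0
  have h0top : Tendsto f (nhdsWithin 0 (Set.Ioi 0)) atTop := by
    have hC : 0 < c₁ * (1/2 : ℝ) ^ b₁ := mul_pos hc₁ (Real.rpow_pos_of_pos (by norm_num) _)
    have hlow : ∀ᶠ u in nhdsWithin 0 (Set.Ioi 0), (c₁ * (1/2 : ℝ) ^ b₁) * u ^ a₁ ≤ f u := by
      filter_upwards [Ioo_mem_nhdsGT_of_mem
        (show (0:ℝ) ∈ Set.Ico (0:ℝ) (1/2) by norm_num)] with u hu
      have hu0 : (0:ℝ) < u := hu.1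
      have hu1 : (0:ℝ) < 1 - u := by linarith [hu.2]
      have hb : (1/2 : ℝ) ^ b₁ ≤ (1 - u) ^ b₁ :=
        Real.rpow_le_rpow (by norm_num) (by linarith [hu.2]) (by linarith)
      have h1 : (c₁ * (1/2 : ℝ) ^ b₁) * u ^ a₁ ≤ c₁ * u ^ a₁ * (1 - u) ^ b₁ := by
        have h := mul_le_mul_of_nonneg_left hb
          (le_of_lt (mul_pos hc₁ (Real.rpow_pos_of_pos hu0 a₁)))
        nlinarith [h]
      have h2 : 0 ≤ c₂ * u ^ a₂ * (1 - u) ^ b₂ :=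
        le_of_lt (mul_pos (mul_pos hc₂ (Real.rpow_pos_of_pos hu0 _))
          (Real.rpow_pos_of_pos hu1 _))
      show (c₁ * (1/2 : ℝ) ^ b₁) * u ^ a₁
        ≤ c₁ * u ^ a₁ * (1 - u) ^ b₁ + c₂ * u ^ a₂ * (1 - u) ^ b₂
      linarith
    exact tendsto_atTop_mono' _ hlow ((aux_rpow_blowup ha₁0).const_mul_atTop hC)
  -- blow up at 1
  have h1map : Tendsto (fun u : ℝ => 1 - u) (nhdsWithin 1 (Set.Iio 1))
      (nhdsWithin 0 (Set.Ioi 0)) := by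
    apply tendsto_nhdsWithin_of_tendsto_nhds_of_eventually_within
    · have hc : Continuous (fun u : ℝ => 1 - u) := by continuity
      have h : Tendsto (fun u : ℝ => 1 - u) (nhds 1) (nhds 0) := by
        simpa using hc.tendsto 1
      exact h.mono_left nhdsWithin_le_nhds
    · filter_upwards [self_mem_nhdsWithin] with u hu
      have : u < 1 := hu
      exact mem_Ioi.mpr (by linarith)
  have h1top : Tendsto f (nhdsWithin 1 (Set.Iio 1)) atTop := by
    have hC : 0 < c₂ * (1/2 : ℝ) ^ a₂ := mul_pos hc₂ (Real.rpow_pos_of_pos (by norm_num) _)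
    have hlow : ∀ᶠ u in nhdsWithin 1 (Set.Iio 1),
        (c₂ * (1/2 : ℝ) ^ a₂) * (1 - u) ^ b₂ ≤ f u := by
      filter_upwards [Ioo_mem_nhdsLT_of_mem
        (show (1:ℝ) ∈ Set.Ioc (1/2 : ℝ) 1 by norm_num)] with u hu
      have hu0 : (0:ℝ) < u := by linarith [hu.1]
      have hu1 : (0:ℝ) < 1 - u := by linarith [hu.2]
      have hb : (1/2 : ℝ) ^ a₂ ≤ u ^ a₂ :=
        Real.rpow_le_rpow (by norm_num) (le_of_lt hu.1) (by linarith)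
      have h1 : (c₂ * (1/2 : ℝ) ^ a₂) * (1 - u) ^ b₂ ≤ c₂ * u ^ a₂ * (1 - u) ^ b₂ := by
        have h := mul_le_mul_of_nonneg_right (mul_le_mul_of_nonneg_left hb (le_of_lt hc₂))
          (le_of_lt (Real.rpow_pos_of_pos hu1 b₂))
        nlinarith [h]
      have h2 : 0 ≤ c₁ * u ^ a₁ * (1 - u) ^ b₁ :=
        le_of_lt (mul_pos (mul_pos hc₁ (Real.rpow_pos_of_pos hu0 _))
          (Real.rpow_pos_of_pos hu1 _))
      show (c₂ * (1/2 : ℝ) ^ a₂) * (1 - u) ^ b₂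
        ≤ c₁ * u ^ a₁ * (1 - u) ^ b₁ + c₂ * u ^ a₂ * (1 - u) ^ b₂
      linarith
    have htend : Tendsto (fun u : ℝ => (c₂ * (1/2 : ℝ) ^ a₂) * (1 - u) ^ b₂)
        (nhdsWithin 1 (Set.Iio 1)) atTop := by
      have := ((aux_rpow_blowup hb₂0).comp h1map).const_mul_atTop hC
      simpa [Function.comp] using this
    exact tendsto_atTop_mono' _ hlow htend
  clear_value f f' f''
  clear hfdef hf'def hf''def hf' hf'' hpos
  -- thresholds
  obtain ⟨ε, hε, hεsub⟩ := mem_nhdsGT_iff_exists_Ioo_subset.mp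
    (h0top.eventually_gt_atTop (f (1/2)))
  obtain ⟨δ, hδ, hδsub⟩ := mem_nhdsLT_iff_exists_Ioo_subset.mp
    (h1top.eventually_gt_atTop (f (1/2)))
  have hε0 : (0:ℝ) < ε := hε
  have hδ1 : δ < 1 := hδ
  set α := min ε (1/2) / 2 with hαdef
  set β := (max δ (1/2) + 1) / 2 with hβdef
  have hα0 : 0 < α := by
    have := lt_min hε0 (show (0:ℝ) < 1/2 by norm_num)
    simp only [hαdef]; linarith
  have hαε : α < ε := by
    have h1 : min ε (1/2) ≤ ε := min_le_left _ _
    simp only [hαdef]; linarith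
  have hαh : α < 1/2 := by
    have h1 : min ε (1/2) ≤ 1/2 := min_le_right _ _
    simp only [hαdef]; linarith
  have hmax1 : max δ (1/2) < 1 := max_lt hδ1 (by norm_num)
  have hβ1 : β < 1 := by simp only [hβdef]; linarith
  have hδβ : δ < β := by
    have h1 : δ ≤ max δ (1/2) := le_max_left _ _
    simp only [hβdef]; linarith
  have hhβ : 1/2 < β := by
    have h1 : (1/2 : ℝ) ≤ max δ (1/2) := le_max_right _ _
    simp only [hβdef]; linarith
  have hsub : Set.Icc α β ⊆ Set.Ioo (0:ℝ) 1 := fun x hx =>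
    ⟨lt_of_lt_of_le hα0 hx.1, lt_of_le_of_lt hx.2 hβ1⟩
  obtain ⟨m, hm, hmin⟩ := (isCompact_Icc).exists_isMinOn
    (⟨1/2, by constructor <;> linarith⟩ : (Set.Icc α β).Nonempty) (hfc.mono hsub)
  have hminI := isMinOn_iff.mp hmin
  have hmIoo : m ∈ Set.Ioo (0:ℝ) 1 := hsub hm
  have hfm_half : f m ≤ f (1/2) := hminI (1/2) ⟨by linarith, by linarith⟩
  refine ⟨m, hmIoo, ?_⟩
  intro u hu hne
  rcases lt_or_ge u α with hlt | hge
  · have : f (1/2) < f u := hεsub ⟨hu.1, by linarith⟩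
    linarith
  · rcases lt_or_ge β u with hgt | hle
    · have : f (1/2) < f u := hδsub ⟨by linarith, hu.2⟩
      linarith
    · have huI : u ∈ Set.Icc α β := ⟨hge, hle⟩
      have hle' : f m ≤ f u := hminI u huI
      rcases eq_or_lt_of_le hle' with heq | hlt'
      · exfalso
        have hzc := hconv.2 hu hmIoo hne (show (0:ℝ) < 1/2 by norm_num)
          (show (0:ℝ) < 1/2 by norm_num) (by norm_num)
        have hmid : (1/2 : ℝ) • u + (1/2 : ℝ) • m ∈ Set.Icc α β := by
          simp only [smul_eq_mul]
          constructor <;> [skip; skip] <;>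
            [linarith [hm.1, hm.2, huI.1, huI.2]; linarith [hm.1, hm.2, huI.1, huI.2]]
        have hm2 := hminI _ hmid
        rw [← heq] at hzc
        simp only [smul_eq_mul] at hzc hm2
        linarith
      · exact hlt'

set_option maxHeartbeats 1000000 in
/-- The reciprocal assessor of the working beta-mixture model has a unique strict
minimizer on (0,1). -/
theorem reciprocal_assessor_unique_minimizer
    (γl γr kl kr Bl Br pl pr : ℝ)
    (hγl : 2 < γl) (hγr : 2 < γr)
    (hkl : kl ∈ Set.Ioo (0 : ℝ) 1) (hkr : kr ∈ Set.Ioo (0 : ℝ) 1)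
    (hBl : 0 < Bl) (hBr : 0 < Br)
    (hpl : pl ∈ Set.Ioo (0 : ℝ) 1) (hpr : pr ∈ Set.Ioo (0 : ℝ) 1)
    (hsum : pl + pr < 1) :
    ∃! ustar : ℝ, ustar ∈ Set.Ioo (0 : ℝ) 1 ∧
      ∀ u ∈ Set.Ioo (0 : ℝ) 1, u ≠ ustar →
        1 + (pl * Bl⁻¹ * ustar ^ (kl - 1) * (1 - ustar) ^ (γl - 1)
          + pr * Br⁻¹ * ustar ^ (γr - 1) * (1 - ustar) ^ (kr - 1)) / (1 - pl - pr)
        < 1 + (pl * Bl⁻¹ * u ^ (kl - 1) * (1 - u) ^ (γl - 1)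
          + pr * Br⁻¹ * u ^ (γr - 1) * (1 - u) ^ (kr - 1)) / (1 - pl - pr) := by
  have hD : 0 < 1 - pl - pr := by linarith
  obtain ⟨m, hm, hmin⟩ := mix_strict_min (pl * Bl⁻¹) (pr * Br⁻¹) (kl - 1) (γl - 1)
    (γr - 1) (kr - 1)
    (mul_pos hpl.1 (inv_pos.mpr hBl)) (mul_pos hpr.1 (inv_pos.mpr hBr))
    (by linarith [hkl.1]) (by linarith [hkl.2]) (by linarith)
    (by linarith) (by linarith [hkr.1]) (by linarith [hkr.2])
  refine ⟨m, ⟨hm, ?_⟩, ?_⟩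
  · intro u hu hne
    have h := hmin u hu hne
    gcongr
  · rintro y ⟨hy, hylt⟩
    by_contra hne
    have h1 := hylt m hm (fun h => hne h.symm)
    have h2 := hmin y hy hne
    have h2' : 1 + (pl * Bl⁻¹ * m ^ (kl - 1) * (1 - m) ^ (γl - 1)
          + pr * Br⁻¹ * m ^ (γr - 1) * (1 - m) ^ (kr - 1)) / (1 - pl - pr)
        < 1 + (pl * Bl⁻¹ * y ^ (kl - 1) * (1 - y) ^ (γl - 1)
          + pr * Br⁻¹ * y ^ (γr - 1) * (1 - y) ^ (kr - 1)) / (1 - pl - pr) := by gcongr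
    linarith
end

section
/- Let b : (0,1) → ℝ be continuous and strictly convex with b(u) → +∞ as u → 0 from the right and as u → 1 from the left, let u* ∈ (0,1) be its unique minimizer and b* = b(u*). Then the function c defined for t ∈ (0, 1/b*] by c(t) = λ({u ∈ (0,1) : b(u) ≥ 1/t}), where λ denotes Lebesgue measure, is continuous and strictly increasing on (0, 1/b*], with c(1/b*) = 1. -/
open Set Filter MeasureTheory

/-- The null distribution function `c(t) = λ({u ∈ (0,1) : b(u) ≥ 1/t})` of the significance
index is continuous and strictly increasing on `(0, 1/b*]`, with `c(1/b*) = 1`, where `b` is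
the (continuous, strictly convex, endpoint-divergent) reciprocal assessor with unique
minimizer `u*` and minimum value `b* = b(u*)`. -/
theorem null_distribution_continuous_strictMono (b : ℝ → ℝ) (ustar : ℝ)
    (hb_cont : ContinuousOn b (Set.Ioo 0 1))
    (hb_conv : StrictConvexOn ℝ (Set.Ioo (0 : ℝ) 1) b)
    (hb0 : Filter.Tendsto b (nhdsWithin 0 (Set.Ioi 0)) Filter.atTop)
    (hb1 : Filter.Tendsto b (nhdsWithin 1 (Set.Iio 1)) Filter.atTop)
    (hustar : ustar ∈ Set.Ioo (0 : ℝ) 1)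
    (hmin : ∀ u ∈ Set.Ioo (0 : ℝ) 1, u ≠ ustar → b ustar < b u) :
    ContinuousOn
      (fun t : ℝ => (MeasureTheory.volume {u : ℝ | u ∈ Set.Ioo (0 : ℝ) 1 ∧ 1 / t ≤ b u}).toReal)
      (Set.Ioc 0 (1 / b ustar)) ∧
    StrictMonoOn
      (fun t : ℝ => (MeasureTheory.volume {u : ℝ | u ∈ Set.Ioo (0 : ℝ) 1 ∧ 1 / t ≤ b u}).toReal)
      (Set.Ioc 0 (1 / b ustar)) ∧
    (MeasureTheory.volume
      {u : ℝ | u ∈ Set.Ioo (0 : ℝ) 1 ∧ 1 / (1 / b ustar) ≤ b u}).toReal = 1 := by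
  obtain ⟨hu0, hu1⟩ := hustar
  -- b attains its minimum at ustar
  have hBle : ∀ u ∈ Set.Ioo (0 : ℝ) 1, b ustar ≤ b u := by
    intro u hu
    rcases eq_or_ne u ustar with rfl | h
    · exact le_refl _
    · exact (hmin u hu h).le
  -- strict monotonicity to the right of ustar
  have hmonoR : StrictMonoOn b (Set.Ico ustar 1) := by
    intro x hx y hy hxy
    have hy01 : y ∈ Set.Ioo (0 : ℝ) 1 := ⟨lt_of_lt_of_le hu0 hy.1, hy.2⟩
    rcases eq_or_lt_of_le hx.1 with rfl | hux
    · exact hmin y hy01 (ne_of_gt hxy)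
    · have huy : ustar < y := hux.trans hxy
      have hxseg : x ∈ openSegment ℝ ustar y := by
        rw [openSegment_eq_Ioo huy]; exact ⟨hux, hxy⟩
      have := hb_conv.lt_on_openSegment ⟨hu0, hu1⟩ hy01 (ne_of_lt huy) hxseg
      rwa [max_eq_right (hmin y hy01 (ne_of_gt huy)).le] at this
  -- strict antitonicity to the left of ustar
  have hmonoL : StrictAntiOn b (Set.Ioc 0 ustar) := by
    intro x hx y hy hxy
    have hx01 : x ∈ Set.Ioo (0 : ℝ) 1 := ⟨hx.1, lt_of_le_of_lt hx.2 hu1⟩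
    rcases eq_or_lt_of_le hy.2 with rfl | hyu
    · exact hmin x hx01 (ne_of_lt hxy)
    · have hxu : x < ustar := hxy.trans hyu
      have hyseg : y ∈ openSegment ℝ x ustar := by
        rw [openSegment_eq_Ioo hxu]; exact ⟨hxy, hyu⟩
      have := hb_conv.lt_on_openSegment hx01 ⟨hu0, hu1⟩ (ne_of_lt hxu) hyseg
      rwa [max_eq_left (hmin x hx01 (ne_of_lt hxu)).le] at this
  -- existence of the right root
  have hexR : ∀ s : ℝ, ∃ x, b ustar ≤ s → x ∈ Set.Ico ustar 1 ∧ b x = s := by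
    intro s
    by_cases hs : b ustar ≤ s
    · rcases eq_or_lt_of_le hs with h | h
      · exact ⟨ustar, fun _ => ⟨Set.left_mem_Ico.2 hu1, h⟩⟩
      · have hev : ∀ᶠ x in nhdsWithin 1 (Set.Iio 1), s < b x := hb1.eventually_gt_atTop s
        have hev2 : ∀ᶠ x in nhdsWithin 1 (Set.Iio 1), x ∈ Set.Ioo ustar 1 :=
          Ioo_mem_nhdsLT_of_mem ⟨hu1, le_refl 1⟩
        obtain ⟨y, hys, hy⟩ := (hev.and hev2).exists
        have hsub : Set.Icc ustar y ⊆ Set.Ioo 0 1 :=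
          fun z hz => ⟨lt_of_lt_of_le hu0 hz.1, lt_of_le_of_lt hz.2 hy.2⟩
        have hIVT := intermediate_value_Ioo hy.1.le (hb_cont.mono hsub)
        obtain ⟨x, hx, hbx⟩ := hIVT ⟨h, hys⟩
        exact ⟨x, fun _ => ⟨⟨hx.1.le, hx.2.trans hy.2⟩, hbx⟩⟩
    · exact ⟨ustar, fun h => absurd h hs⟩
  -- existence of the left root
  have hexL : ∀ s : ℝ, ∃ x, b ustar ≤ s → x ∈ Set.Ioc 0 ustar ∧ b x = s := by
    intro s
    by_cases hs : b ustar ≤ s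
    · rcases eq_or_lt_of_le hs with h | h
      · exact ⟨ustar, fun _ => ⟨Set.right_mem_Ioc.2 hu0, h⟩⟩
      · have hev : ∀ᶠ x in nhdsWithin 0 (Set.Ioi 0), s < b x := hb0.eventually_gt_atTop s
        have hev2 : ∀ᶠ x in nhdsWithin 0 (Set.Ioi 0), x ∈ Set.Ioo 0 ustar :=
          Ioo_mem_nhdsGT_of_mem ⟨le_refl 0, hu0⟩
        obtain ⟨y, hys, hy⟩ := (hev.and hev2).exists
        have hsub : Set.Icc y ustar ⊆ Set.Ioo 0 1 :=
          fun z hz => ⟨lt_of_lt_of_le hy.1 hz.1, lt_of_le_of_lt hz.2 hu1⟩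
        have hIVT := intermediate_value_Ioo' hy.2.le (hb_cont.mono hsub)
        obtain ⟨x, hx, hbx⟩ := hIVT ⟨h, hys⟩
        exact ⟨x, fun _ => ⟨⟨hy.1.trans hx.1, hx.2.le⟩, hbx⟩⟩
    · exact ⟨ustar, fun h => absurd h hs⟩
  choose r hr using hexR
  choose l hl using hexL
  -- basic facts about r and l
  have hrI : ∀ s, b ustar ≤ s → r s ∈ Set.Ico ustar 1 := fun s hs => (hr s hs).1
  have hrb : ∀ s, b ustar ≤ s → b (r s) = s := fun s hs => (hr s hs).2
  have hlI : ∀ s, b ustar ≤ s → l s ∈ Set.Ioc 0 ustar := fun s hs => (hl s hs).1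
  have hlb : ∀ s, b ustar ≤ s → b (l s) = s := fun s hs => (hl s hs).2
  -- r is strictly monotone on Ici (b ustar)
  have hrmono : StrictMonoOn r (Set.Ici (b ustar)) := by
    intro s1 hs1 s2 hs2 h12
    by_contra h
    push_neg at h
    have := (hmonoR.le_iff_le (hrI s2 hs2) (hrI s1 hs1)).2 h
    rw [hrb s1 hs1, hrb s2 hs2] at this
    exact absurd this (not_le.2 h12)
  -- l is strictly antitone on Ici (b ustar)
  have hlanti : StrictAntiOn l (Set.Ici (b ustar)) := by
    intro s1 hs1 s2 hs2 h12
    by_contra h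
    push_neg at h
    have := (hmonoL.le_iff_ge (hlI s2 hs2) (hlI s1 hs1)).2 h
    rw [hlb s2 hs2, hlb s1 hs1] at this
    exact absurd this (not_le.2 h12)
  -- r inverts b on the right, l inverts b on the left
  have hBleR : ∀ u ∈ Set.Ico ustar 1, b ustar ≤ b u :=
    fun u hu => hBle u ⟨lt_of_lt_of_le hu0 hu.1, hu.2⟩
  have hBleL : ∀ u ∈ Set.Ioc 0 ustar, b ustar ≤ b u :=
    fun u hu => hBle u ⟨hu.1, lt_of_le_of_lt hu.2 hu1⟩
  have hrsurj : ∀ u ∈ Set.Ico ustar 1, r (b u) = u := by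
    intro u hu
    exact hmonoR.injOn (hrI _ (hBleR u hu)) hu (hrb _ (hBleR u hu))
  have hlsurj : ∀ u ∈ Set.Ioc 0 ustar, l (b u) = u := by
    intro u hu
    exact hmonoL.injOn (hlI _ (hBleL u hu)) hu (hlb _ (hBleL u hu))
  have hrB : r (b ustar) = ustar := hrsurj ustar (Set.left_mem_Ico.2 hu1)
  have hlB : l (b ustar) = ustar := hlsurj ustar (Set.right_mem_Ioc.2 hu0)
  -- the sublevel set identity
  have hset : ∀ s, b ustar ≤ s →
      {u : ℝ | u ∈ Set.Ioo (0 : ℝ) 1 ∧ s ≤ b u} = Set.Ioo 0 1 \ Set.Ioo (l s) (r s) := by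
    intro s hs
    ext u
    simp only [Set.mem_setOf_eq, Set.mem_diff, Set.mem_Ioo]
    constructor
    · rintro ⟨hu01, hbu⟩
      refine ⟨hu01, fun hlu => ?_⟩
      rcases le_total u ustar with hc | hc
      · have h1 : b u < b (l s) := hmonoL (hlI s hs) ⟨hu01.1, hc⟩ hlu.1
        rw [hlb s hs] at h1
        exact absurd hbu (not_le.2 h1)
      · have h1 : b u < b (r s) := hmonoR ⟨hc, hu01.2⟩ (hrI s hs) hlu.2
        rw [hrb s hs] at h1
        exact absurd hbu (not_le.2 h1)
    · rintro ⟨hu01, hnot⟩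
      refine ⟨hu01, ?_⟩
      rcases le_or_gt u (l s) with hc | hc
      · have h1 : b (l s) ≤ b u :=
          (hmonoL.le_iff_ge (hlI s hs) ⟨hu01.1, hc.trans (hlI s hs).2⟩).2 hc
        rwa [hlb s hs] at h1
      · have hru : r s ≤ u := by
          by_contra h
          exact hnot ⟨hc, not_le.1 h⟩
        have h1 : b (r s) ≤ b u :=
          (hmonoR.le_iff_le (hrI s hs) ⟨(hrI s hs).1.trans hru, hu01.2⟩).2 hru
        rwa [hrb s hs] at h1
  -- the volume formula
  have hvol : ∀ s, b ustar ≤ s →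
      (MeasureTheory.volume {u : ℝ | u ∈ Set.Ioo (0 : ℝ) 1 ∧ s ≤ b u}).toReal
        = 1 - (r s - l s) := by
    intro s hs
    have hl0 : 0 < l s := (hlI s hs).1
    have hr1 : r s < 1 := (hrI s hs).2
    have hlr : l s ≤ r s := (hlI s hs).2.trans (hrI s hs).1
    have hsub : Set.Ioo (l s) (r s) ⊆ Set.Ioo (0 : ℝ) 1 :=
      Set.Ioo_subset_Ioo hl0.le hr1.le
    rw [hset s hs, measure_diff hsub measurableSet_Ioo.nullMeasurableSet
      (by rw [Real.volume_Ioo]; exact ENNReal.ofReal_ne_top),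
      Real.volume_Ioo, Real.volume_Ioo,
      ENNReal.toReal_sub_of_le (ENNReal.ofReal_le_ofReal (by linarith)) ENNReal.ofReal_ne_top,
      ENNReal.toReal_ofReal (by linarith), ENNReal.toReal_ofReal (by linarith)]
    ring
  -- continuity of r on Ici (b ustar)
  have hrcont : ContinuousOn r (Set.Ici (b ustar)) := by
    intro s hs
    rcases eq_or_lt_of_le (Set.mem_Ici.1 hs) with h | h
    · subst h
      apply hrmono.continuousWithinAt_right_of_exists_between self_mem_nhdsWithin
      intro y hy
      rw [hrB] at hy
      have hu1' : min y ((ustar + 1) / 2) < 1 :=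
        lt_of_le_of_lt (min_le_right _ _) (by linarith)
      have huu : ustar < min y ((ustar + 1) / 2) := lt_min hy (by linarith)
      refine ⟨b (min y ((ustar + 1) / 2)), hBleR _ ⟨huu.le, hu1'⟩, ?_⟩
      rw [hrsurj _ ⟨huu.le, hu1'⟩, hrB]
      exact ⟨huu, min_le_left _ _⟩
    · have hrs : ustar < r s := by
        rcases eq_or_lt_of_le (hrI s hs).1 with h2 | h2
        · have := hrb s hs
          rw [← h2] at this
          exact absurd this (ne_of_lt h)
        · exact h2
      refine ContinuousAt.continuousWithinAt ?_
      apply hrmono.continuousAt_of_exists_between (Ici_mem_nhds h)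
      · intro y hy
        have h1 : max y ustar < r s := max_lt hy hrs
        have hmem : max y ustar ∈ Set.Ico ustar 1 := ⟨le_max_right _ _, h1.trans (hrI s hs).2⟩
        refine ⟨b (max y ustar), hBleR _ hmem, ?_⟩
        rw [hrsurj _ hmem]
        exact ⟨le_max_left _ _, h1⟩
      · intro y hy
        have hr1 : r s < 1 := (hrI s hs).2
        have h1 : r s < min y ((r s + 1) / 2) := lt_min hy (by linarith)
        have hu1' : min y ((r s + 1) / 2) < 1 := lt_of_le_of_lt (min_le_right _ _) (by linarith)
        have hmem : min y ((r s + 1) / 2) ∈ Set.Ico ustar 1 := ⟨(hrI s hs).1.trans h1.le, hu1'⟩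
        refine ⟨b (min y ((r s + 1) / 2)), hBleR _ hmem, ?_⟩
        rw [hrsurj _ hmem]
        exact ⟨h1, min_le_left _ _⟩
  -- continuity of l on Ici (b ustar), via negation
  have hnlmono : StrictMonoOn (fun s => -(l s)) (Set.Ici (b ustar)) :=
    fun s1 hs1 s2 hs2 h12 => neg_lt_neg (hlanti hs1 hs2 h12)
  have hnlcont : ContinuousOn (fun s => -(l s)) (Set.Ici (b ustar)) := by
    intro s hs
    rcases eq_or_lt_of_le (Set.mem_Ici.1 hs) with h | h
    · subst h
      apply hnlmono.continuousWithinAt_right_of_exists_between self_mem_nhdsWithin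
      intro y hy
      simp only [hlB] at hy ⊢
      have h1 : max (-y) (ustar / 2) < ustar := max_lt (by linarith) (by linarith)
      have h2 : (0 : ℝ) < max (-y) (ustar / 2) :=
        lt_of_lt_of_le (by linarith) (le_max_right _ _)
      refine ⟨b (max (-y) (ustar / 2)), hBleL _ ⟨h2, h1.le⟩, ?_⟩
      rw [hlsurj _ ⟨h2, h1.le⟩]
      constructor
      · exact neg_lt_neg h1
      · have := le_max_left (-y) (ustar / 2)
        linarith
    · have hls : l s < ustar := by
        rcases eq_or_lt_of_le (hlI s hs).2 with h2 | h2
        · have := hlb s hs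
          rw [h2] at this
          exact absurd this (ne_of_lt h)
        · exact h2
      refine ContinuousAt.continuousWithinAt ?_
      apply hnlmono.continuousAt_of_exists_between (Ici_mem_nhds h)
      · intro y hy
        have hl0 : 0 < l s := (hlI s hs).1
        have h1 : l s < min (-y) ustar := lt_min (by linarith) hls
        have hmem : min (-y) ustar ∈ Set.Ioc 0 ustar := ⟨hl0.trans h1, min_le_right _ _⟩
        refine ⟨b (min (-y) ustar), hBleL _ hmem, ?_⟩
        rw [hlsurj _ hmem]
        constructor
        · have := min_le_left (-y) ustar
          linarith
        · exact neg_lt_neg h1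
      · intro y hy
        have hl0 : 0 < l s := (hlI s hs).1
        have h1 : max (-y) (l s / 2) < l s := max_lt (by linarith) (by linarith)
        have h2 : (0 : ℝ) < max (-y) (l s / 2) :=
          lt_of_lt_of_le (by linarith) (le_max_right _ _)
        have hmem : max (-y) (l s / 2) ∈ Set.Ioc 0 ustar := ⟨h2, h1.le.trans (hlI s hs).2⟩
        refine ⟨b (max (-y) (l s / 2)), hBleL _ hmem, ?_⟩
        rw [hlsurj _ hmem]
        constructor
        · exact neg_lt_neg h1
        · have := le_max_left (-y) (l s / 2)
          linarith
  have hlcont : ContinuousOn l (Set.Ici (b ustar)) := by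
    have := hnlcont.neg
    simpa only [Pi.neg_def, neg_neg] using this
  -- the third claim
  have hthird : (MeasureTheory.volume
      {u : ℝ | u ∈ Set.Ioo (0 : ℝ) 1 ∧ 1 / (1 / b ustar) ≤ b u}).toReal = 1 := by
    have hId : {u : ℝ | u ∈ Set.Ioo (0 : ℝ) 1 ∧ 1 / (1 / b ustar) ≤ b u} = Set.Ioo 0 1 := by
      ext u
      simp only [Set.mem_setOf_eq, one_div_one_div]
      exact ⟨fun h => h.1, fun h => ⟨h, hBle u h⟩⟩
    rw [hId, Real.volume_Ioo]
    norm_num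
  rcases le_or_gt (b ustar) 0 with hB0 | hB0
  · have hempty : Set.Ioc (0 : ℝ) (1 / b ustar) = ∅ :=
      Set.Ioc_eq_empty (not_lt.2 (one_div_nonpos.2 hB0))
    exact ⟨by rw [hempty]; exact continuousOn_empty _,
      by rw [hempty]; exact fun x hx => absurd hx (Set.notMem_empty x), hthird⟩
  · have hmem1 : ∀ t ∈ Set.Ioc (0 : ℝ) (1 / b ustar), b ustar ≤ 1 / t := by
      intro t ht
      have := one_div_le_one_div_of_le ht.1 ht.2
      rwa [one_div_one_div] at this
    have hinvcont : ContinuousOn (fun t : ℝ => 1 / t) (Set.Ioc (0 : ℝ) (1 / b ustar)) :=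
      continuousOn_const.div continuousOn_id (fun t ht => ne_of_gt ht.1)
    have hmaps : Set.MapsTo (fun t : ℝ => 1 / t) (Set.Ioc (0 : ℝ) (1 / b ustar))
        (Set.Ici (b ustar)) := fun t ht => hmem1 t ht
    have heq : Set.EqOn
        (fun t : ℝ => (MeasureTheory.volume
          {u : ℝ | u ∈ Set.Ioo (0 : ℝ) 1 ∧ 1 / t ≤ b u}).toReal)
        (fun t : ℝ => 1 - (r (1 / t) - l (1 / t))) (Set.Ioc 0 (1 / b ustar)) :=
      fun t ht => hvol (1 / t) (hmem1 t ht)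
    refine ⟨?_, ?_, hthird⟩
    · refine ContinuousOn.congr ?_ heq
      exact continuousOn_const.sub ((hrcont.comp hinvcont hmaps).sub (hlcont.comp hinvcont hmaps))
    · intro t1 ht1 t2 ht2 h12
      have hs21 : 1 / t2 < 1 / t1 := one_div_lt_one_div_of_lt ht1.1 h12
      have h1 := hrmono (hmem1 t2 ht2) (hmem1 t1 ht1) hs21
      have h2 := hlanti (hmem1 t2 ht2) (hmem1 t1 ht1) hs21
      have e1 := heq ht1
      have e2 := heq ht2
      simp only at e1 e2
      simp only [e1, e2]
      linarith
end

section
/- Let a₁ < a₂ be real numbers and let b : [a₁, a₂] → ℝ be twice differentiable with b''(u) ≥ c for all u ∈ [a₁, a₂], where c > 0. Suppose u₀ ∈ (a₁, a₂) satisfies b'(u₀) = 0. Then for every ε > 0, the Lebesgue measure of the set {u ∈ [a₁, a₂] : b(u₀) ≤ b(u) < b(u₀) + ε} is at most √(8ε/c). -/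
open Set MeasureTheory

/-- Quadratic-minorant bound: if `b` is twice differentiable on `[a₁, a₂]` with second
derivative bounded below by `c > 0` and a critical point `u₀` in the interior, then the
set where `b(u₀) ≤ b(u) < b(u₀) + ε` has Lebesgue measure at most `√(8ε/c)`. -/
theorem near_minimum_sublevel_measure_bound (a1 a2 c : ℝ) (b : ℝ → ℝ)
    (ha : a1 < a2) (hc : 0 < c)
    (hdiff : ∀ u ∈ Set.Icc a1 a2, DifferentiableAt ℝ b u)
    (hdiff2 : ∀ u ∈ Set.Icc a1 a2, DifferentiableAt ℝ (deriv b) u)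
    (hsecond : ∀ u ∈ Set.Icc a1 a2, c ≤ deriv (deriv b) u)
    (u0 : ℝ) (hu0 : u0 ∈ Set.Ioo a1 a2) (hcrit : deriv b u0 = 0) :
    ∀ ε : ℝ, 0 < ε →
      (MeasureTheory.volume
        {u : ℝ | u ∈ Set.Icc a1 a2 ∧ b u0 ≤ b u ∧ b u < b u0 + ε}).toReal
        ≤ Real.sqrt (8 * ε / c) := by
  intro ε hε
  have hu0' : u0 ∈ Set.Icc a1 a2 := Set.mem_Icc_of_Ioo hu0
  -- ψ := deriv b - c (· - u0) is monotone on Icc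
  set ψ : ℝ → ℝ := fun u => deriv b u - c * (u - u0) with hψdef
  have hψderiv : ∀ x ∈ Set.Icc a1 a2, HasDerivAt ψ (deriv (deriv b) x - c * 1) x := by
    intro x hx
    exact (hdiff2 x hx).hasDerivAt.sub (((hasDerivAt_id x).sub_const u0).const_mul c)
  have hψmono : MonotoneOn ψ (Set.Icc a1 a2) := by
    apply monotoneOn_of_deriv_nonneg (convex_Icc a1 a2)
    · intro x hx
      exact ((hdiff2 x hx).continuousAt.sub (by fun_prop)).continuousWithinAt
    · intro x hx
      rw [interior_Icc] at hx
      exact (hψderiv x (Set.mem_Icc_of_Ioo hx)).differentiableAt.differentiableWithinAt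
    · intro x hx
      rw [interior_Icc] at hx
      rw [(hψderiv x (Set.mem_Icc_of_Ioo hx)).deriv]
      have := hsecond x (Set.mem_Icc_of_Ioo hx)
      linarith
  have hψ0 : ψ u0 = 0 := by simp [hψdef, hcrit]
  -- g := b - c/2 (· - u0)^2 attains its minimum on Icc at u0
  set g : ℝ → ℝ := fun u => b u - c / 2 * (u - u0) ^ 2 with hgdef
  have hgderiv : ∀ x ∈ Set.Icc a1 a2, HasDerivAt g (ψ x) x := by
    intro x hx
    have h2 : HasDerivAt (fun u : ℝ => c / 2 * (u - u0) ^ 2)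
        (c / 2 * (2 * (x - u0) ^ 1 * 1)) x :=
      (((hasDerivAt_id x).sub_const u0).pow 2).const_mul (c / 2)
    have := (hdiff x hx).hasDerivAt.sub h2
    refine this.congr_deriv ?_
    simp [hψdef]; ring
  have hgcont : ContinuousOn g (Set.Icc a1 a2) := fun x hx =>
    (hgderiv x hx).differentiableAt.continuousAt.continuousWithinAt
  have hkey : ∀ u ∈ Set.Icc a1 a2, g u0 ≤ g u := by
    intro u hu
    rcases le_total u u0 with h | h
    · -- g antitone on [a1, u0]
      have : AntitoneOn g (Set.Icc a1 u0) := by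
        apply antitoneOn_of_deriv_nonpos (convex_Icc a1 u0)
        · exact hgcont.mono (Set.Icc_subset_Icc le_rfl hu0'.2)
        · intro x hx
          rw [interior_Icc] at hx
          have hx' : x ∈ Set.Icc a1 a2 := ⟨hx.1.le, hx.2.le.trans hu0'.2⟩
          exact (hgderiv x hx').differentiableAt.differentiableWithinAt
        · intro x hx
          rw [interior_Icc] at hx
          have hx' : x ∈ Set.Icc a1 a2 := ⟨hx.1.le, hx.2.le.trans hu0'.2⟩
          rw [(hgderiv x hx').deriv]
          have := hψmono hx' hu0' hx.2.le
          linarith [hψ0]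
      exact this ⟨hu.1, h⟩ ⟨hu0'.1, le_rfl⟩ h
    · have : MonotoneOn g (Set.Icc u0 a2) := by
        apply monotoneOn_of_deriv_nonneg (convex_Icc u0 a2)
        · exact hgcont.mono (Set.Icc_subset_Icc hu0'.1 le_rfl)
        · intro x hx
          rw [interior_Icc] at hx
          have hx' : x ∈ Set.Icc a1 a2 := ⟨hu0'.1.trans hx.1.le, hx.2.le⟩
          exact (hgderiv x hx').differentiableAt.differentiableWithinAt
        · intro x hx
          rw [interior_Icc] at hx
          have hx' : x ∈ Set.Icc a1 a2 := ⟨hu0'.1.trans hx.1.le, hx.2.le⟩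
          rw [(hgderiv x hx').deriv]
          have := hψmono hu0' hx' hx.1.le
          linarith [hψ0]
      exact this ⟨le_rfl, hu0'.2⟩ ⟨h, hu.2⟩ h
  -- hence b u ≥ b u0 + c/2 (u - u0)^2 on Icc
  have hquad : ∀ u ∈ Set.Icc a1 a2, b u0 + c / 2 * (u - u0) ^ 2 ≤ b u := by
    intro u hu
    have := hkey u hu
    simp only [hgdef] at this
    nlinarith
  -- set inclusion into an interval of length √(8ε/c)
  set r : ℝ := Real.sqrt (2 * ε / c) with hrdef
  have hsub : {u : ℝ | u ∈ Set.Icc a1 a2 ∧ b u0 ≤ b u ∧ b u < b u0 + ε}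
      ⊆ Set.Ioo (u0 - r) (u0 + r) := by
    intro u hu
    obtain ⟨hu1, _, hu3⟩ := hu
    have h1 : c / 2 * (u - u0) ^ 2 < ε := by
      have := hquad u hu1; linarith
    have h2 : (u - u0) ^ 2 < 2 * ε / c := by
      rw [lt_div_iff₀ hc]; nlinarith
    have h3 : |u - u0| < r := by
      rw [← Real.sqrt_sq_eq_abs]
      exact Real.sqrt_lt_sqrt (sq_nonneg _) h2
    rw [abs_lt] at h3
    constructor <;> [linarith [h3.1]; linarith [h3.2]]
  have hmeas : MeasureTheory.volume
      {u : ℝ | u ∈ Set.Icc a1 a2 ∧ b u0 ≤ b u ∧ b u < b u0 + ε}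
      ≤ ENNReal.ofReal (2 * r) := by
    calc _ ≤ MeasureTheory.volume (Set.Ioo (u0 - r) (u0 + r)) := measure_mono hsub
    _ = ENNReal.ofReal (2 * r) := by rw [Real.volume_Ioo]; ring_nf
  have htoReal : (MeasureTheory.volume
      {u : ℝ | u ∈ Set.Icc a1 a2 ∧ b u0 ≤ b u ∧ b u < b u0 + ε}).toReal ≤ 2 * r := by
    have := ENNReal.toReal_mono ENNReal.ofReal_ne_top hmeas
    rwa [ENNReal.toReal_ofReal (by positivity)] at this
  have hfinal : 2 * r = Real.sqrt (8 * ε / c) := by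
    rw [hrdef, show (8 : ℝ) * ε / c = 4 * (2 * ε / c) by ring,
      Real.sqrt_mul (by norm_num : (0:ℝ) ≤ 4),
      show Real.sqrt 4 = 2 by
        rw [show (4:ℝ) = 2 ^ 2 by norm_num, Real.sqrt_sq two_pos.le]]
  linarith
end

section
/- Fix γ_l, γ_r > 2 and let B(a,b) = Γ(a)Γ(b)/Γ(a+b) denote the Beta function. Let K be a compact subset of the open region {(π_l, π_r, k_l, k_r) ∈ ℝ⁴ : 0 < π_l, 0 < π_r, π_l + π_r < 1, 0 < k_l < 1, 0 < k_r < 1}, and for p = (π_l, π_r, k_l, k_r) ∈ K let b_p(u) = 1 + (π_l B(k_l, γ_l)^{-1} u^{k_l-1}(1-u)^{γ_l-1} + π_r B(γ_r, k_r)^{-1} u^{γ_r-1}(1-u)^{k_r-1}) / (1 - π_l - π_r) for u ∈ (0,1). Then for every t₀ > 0 there exists u₀ ∈ (0, 1/2), not depending on p, such that for all p ∈ K and all t ≥ t₀, the set {u ∈ (0,1) : b_p(u) < 1/t} is contained in [u₀, 1 − u₀]. -/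
open Set Filter MeasureTheory

/-- The Beta function `B(a,b) = Γ(a)Γ(b)/Γ(a+b)`. -/
noncomputable def betaFn (a b : ℝ) : ℝ := Real.Gamma a * Real.Gamma b / Real.Gamma (a + b)

/-- The open parameter region `{(π_l, π_r, k_l, k_r) : 0 < π_l, 0 < π_r, π_l + π_r < 1,
0 < k_l < 1, 0 < k_r < 1}`. -/
def paramRegion : Set (ℝ × ℝ × ℝ × ℝ) :=
  {p | 0 < p.1 ∧ 0 < p.2.1 ∧ p.1 + p.2.1 < 1 ∧
    0 < p.2.2.1 ∧ p.2.2.1 < 1 ∧ 0 < p.2.2.2 ∧ p.2.2.2 < 1}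

/-- The reciprocal assessor `b_p(u)` of the working beta-mixture model with parameters
`p = (π_l, π_r, k_l, k_r)` and fixed shape parameters `γ_l, γ_r`. -/
noncomputable def bAssessor (γl γr : ℝ) (p : ℝ × ℝ × ℝ × ℝ) (u : ℝ) : ℝ :=
  1 + (p.1 * (betaFn p.2.2.1 γl)⁻¹ * u ^ (p.2.2.1 - 1) * (1 - u) ^ (γl - 1)
    + p.2.1 * (betaFn γr p.2.2.2)⁻¹ * u ^ (γr - 1) * (1 - u) ^ (p.2.2.2 - 1))
    / (1 - p.1 - p.2.1)

lemma gammaContAt {x : ℝ} (hx : 0 < x) : ContinuousAt Real.Gamma x :=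
  (Real.differentiableAt_Gamma fun m =>
    ((neg_nonpos.mpr (Nat.cast_nonneg m)).trans_lt hx).ne').continuousAt

lemma betaFn_pos {a b : ℝ} (ha : 0 < a) (hb : 0 < b) : 0 < betaFn a b :=
  div_pos (mul_pos (Real.Gamma_pos_of_pos ha) (Real.Gamma_pos_of_pos hb))
    (Real.Gamma_pos_of_pos (by linarith))

lemma term_lb {ε Bm u0 κ γm π β u k v γ : ℝ}
    (hε : 0 < ε) (hεπ : ε ≤ π) (hβ : 0 < β) (hβB : β ≤ Bm)
    (hu : 0 < u) (huu0 : u ≤ u0) (hu0 : 0 < u0) (hu01 : u0 ≤ 1)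
    (hkκ : k ≤ κ) (hκ1 : κ ≤ 1) (hv : 1 / 2 ≤ v) (hγ : γ ≤ γm) (h1γ : 1 ≤ γ) :
    ε * Bm⁻¹ * u0 ^ (κ - 1) * (1 / 2 : ℝ) ^ (γm - 1)
      ≤ π * β⁻¹ * u ^ (k - 1) * v ^ (γ - 1) := by
  have hBm : 0 < Bm := lt_of_lt_of_le hβ hβB
  have h1 : u0 ^ (κ - 1) ≤ u ^ (k - 1) :=
    le_trans (Real.rpow_le_rpow_of_exponent_ge hu0 hu01 (by linarith))
      (Real.rpow_le_rpow_of_nonpos hu huu0 (by linarith))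
  have h2 : (1 / 2 : ℝ) ^ (γm - 1) ≤ v ^ (γ - 1) :=
    le_trans (Real.rpow_le_rpow_of_exponent_ge one_half_pos (by norm_num) (by linarith))
      (Real.rpow_le_rpow (by norm_num) hv (by linarith))
  have h3 : Bm⁻¹ ≤ β⁻¹ := inv_anti₀ hβ hβB
  have e1 : ε * Bm⁻¹ ≤ π * β⁻¹ := mul_le_mul hεπ h3 (by positivity) (by linarith)
  have e2 : ε * Bm⁻¹ * u0 ^ (κ - 1) ≤ π * β⁻¹ * u ^ (k - 1) :=
    mul_le_mul e1 h1 (by positivity) (mul_nonneg (by linarith) (by positivity))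
  exact mul_le_mul e2 h2 (by positivity)
    (mul_nonneg (mul_nonneg (by linarith) (by positivity)) (by positivity))

/-- Lemma D.1(i): rejection regions on the u-scale at thresholds `t ≥ t₀` stay uniformly
inside a compact subinterval `[u₀, 1 - u₀]` of (0,1), uniformly over a compact parameter
set `K`. -/
theorem rejection_regions_uniformly_interior (γl γr : ℝ) (hγl : 2 < γl) (hγr : 2 < γr)
    (K : Set (ℝ × ℝ × ℝ × ℝ)) (hK : IsCompact K) (hKsub : K ⊆ paramRegion) :
    ∀ t0 : ℝ, 0 < t0 →
      ∃ u0 ∈ Set.Ioo (0 : ℝ) (1 / 2), ∀ p ∈ K, ∀ t : ℝ, t0 ≤ t →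
        {u : ℝ | u ∈ Set.Ioo (0 : ℝ) 1 ∧ bAssessor γl γr p u < 1 / t}
          ⊆ Set.Icc u0 (1 - u0) := by
  intro t0 ht0
  rcases K.eq_empty_or_nonempty with hKe | hKne
  · exact ⟨1/4, by norm_num, by simp [hKe]⟩
  -- minimum of the mixture weights
  obtain ⟨pε, hpε, hεmin⟩ := hK.exists_isMinOn hKne
    ((continuous_fst.min (continuous_fst.comp continuous_snd)).continuousOn)
  set ε : ℝ := min pε.1 pε.2.1 with hεdef
  have hεpos : 0 < ε := lt_min (hKsub hpε).1 (hKsub hpε).2.1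
  -- maximum of the shape parameters k
  obtain ⟨pκ, hpκ, hκmax⟩ := hK.exists_isMaxOn hKne
    (((continuous_fst.comp (continuous_snd.comp continuous_snd)).max
      (continuous_snd.comp (continuous_snd.comp continuous_snd))).continuousOn)
  set κ : ℝ := max pκ.2.2.1 pκ.2.2.2 with hκdef
  have hκ1 : κ < 1 := max_lt (hKsub hpκ).2.2.2.2.1 (hKsub hpκ).2.2.2.2.2.2
  -- maximum of the beta normalizing constants
  have hγl0 : (0:ℝ) < γl := by linarith
  have hγr0 : (0:ℝ) < γr := by linarith
  have hBcont : ContinuousOn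
      (fun p : ℝ × ℝ × ℝ × ℝ => max (betaFn p.2.2.1 γl) (betaFn γr p.2.2.2)) K := by
    intro p hp
    obtain ⟨_, _, _, hkl, _, hkr, _⟩ := hKsub hp
    have hc1 : ContinuousAt (fun p : ℝ × ℝ × ℝ × ℝ => p.2.2.1) p := by fun_prop
    have hc2 : ContinuousAt (fun p : ℝ × ℝ × ℝ × ℝ => p.2.2.2) p := by fun_prop
    have hg1 : ContinuousAt (Real.Gamma ∘ fun q : ℝ × ℝ × ℝ × ℝ => q.2.2.1) p :=
      ContinuousAt.comp (f := fun q : ℝ × ℝ × ℝ × ℝ => q.2.2.1) (x := p) (gammaContAt hkl) hc1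
    have hg1' : ContinuousAt (Real.Gamma ∘ fun q : ℝ × ℝ × ℝ × ℝ => q.2.2.1 + γl) p :=
      ContinuousAt.comp (f := fun q : ℝ × ℝ × ℝ × ℝ => q.2.2.1 + γl) (x := p)
        (gammaContAt (by linarith : (0:ℝ) < p.2.2.1 + γl)) (hc1.add continuousAt_const)
    have hg2 : ContinuousAt (Real.Gamma ∘ fun q : ℝ × ℝ × ℝ × ℝ => q.2.2.2) p :=
      ContinuousAt.comp (f := fun q : ℝ × ℝ × ℝ × ℝ => q.2.2.2) (x := p) (gammaContAt hkr) hc2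
    have hg2' : ContinuousAt (Real.Gamma ∘ fun q : ℝ × ℝ × ℝ × ℝ => γr + q.2.2.2) p :=
      ContinuousAt.comp (f := fun q : ℝ × ℝ × ℝ × ℝ => γr + q.2.2.2) (x := p)
        (gammaContAt (by linarith : (0:ℝ) < γr + p.2.2.2)) (continuousAt_const.add hc2)
    apply ContinuousAt.continuousWithinAt
    apply ContinuousAt.sup
    · show ContinuousAt
        (fun q : ℝ × ℝ × ℝ × ℝ => Real.Gamma q.2.2.1 * Real.Gamma γl / Real.Gamma (q.2.2.1 + γl)) p
      exact ContinuousAt.div (hg1.mul continuousAt_const) hg1'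
        (Real.Gamma_pos_of_pos (by linarith)).ne'
    · show ContinuousAt
        (fun q : ℝ × ℝ × ℝ × ℝ => Real.Gamma γr * Real.Gamma q.2.2.2 / Real.Gamma (γr + q.2.2.2)) p
      exact ContinuousAt.div (continuousAt_const.mul hg2) hg2'
        (Real.Gamma_pos_of_pos (by linarith)).ne'
  obtain ⟨pB, hpB, hBmax⟩ := hK.exists_isMaxOn hKne hBcont
  set Bm : ℝ := max (betaFn pB.2.2.1 γl) (betaFn γr pB.2.2.2) with hBmdef
  have hBmpos : 0 < Bm :=
    lt_of_lt_of_le (betaFn_pos (hKsub hpB).2.2.2.1 hγl0) (le_max_left _ _)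
  -- the constants
  set γm : ℝ := max γl γr with hγmdef
  set c : ℝ := ε * Bm⁻¹ * (1 / 2 : ℝ) ^ (γm - 1) with hcdef
  have hcpos : 0 < c := by positivity
  set a : ℝ := ((c * t0)⁻¹) ^ ((κ - 1)⁻¹) with hadef
  have hapos : 0 < a := Real.rpow_pos_of_pos (by positivity) _
  have haval : a ^ (κ - 1) = (c * t0)⁻¹ := by
    rw [hadef, ← Real.rpow_mul (by positivity), inv_mul_cancel₀ (by linarith), Real.rpow_one]
  set u0 : ℝ := min (1/4) a with hu0def
  have hu0pos : 0 < u0 := lt_min (by norm_num) hapos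
  have hu0q : u0 ≤ 1/4 := min_le_left _ _
  -- the key lower bound
  have hkey : ∀ p ∈ K, ∀ u : ℝ, 0 < u → u < 1 → (u < u0 ∨ 1 - u0 < u) →
      1 / t0 ≤ bAssessor γl γr p u := by
    intro p hp u hu0p hu1 hcase
    obtain ⟨hπl, hπr, hsum, hkl, hkl1, hkr, hkr1⟩ := hKsub hp
    have hBl : 0 < betaFn p.2.2.1 γl := betaFn_pos hkl hγl0
    have hBr : 0 < betaFn γr p.2.2.2 := betaFn_pos hγr0 hkr
    have hBlm : betaFn p.2.2.1 γl ≤ Bm := le_trans (le_max_left _ _) (hBmax hp)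
    have hBrm : betaFn γr p.2.2.2 ≤ Bm := le_trans (le_max_right _ _) (hBmax hp)
    have hεl : ε ≤ p.1 := le_trans (hεmin hp) (min_le_left _ _)
    have hεr : ε ≤ p.2.1 := le_trans (hεmin hp) (min_le_right _ _)
    have hκl : p.2.2.1 ≤ κ := le_trans (le_max_left _ _) (hκmax hp)
    have hκr : p.2.2.2 ≤ κ := le_trans (le_max_right _ _) (hκmax hp)
    -- the common lower bound for the relevant mixture term
    have hstep : c * u0 ^ (κ - 1) ≥ 1 / t0 := by
      have h1 : a ^ (κ - 1) ≤ u0 ^ (κ - 1) :=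
        Real.rpow_le_rpow_of_nonpos hu0pos (min_le_right _ _) (by linarith)
      have h2 : c * a ^ (κ - 1) ≤ c * u0 ^ (κ - 1) :=
        mul_le_mul_of_nonneg_left h1 hcpos.le
      have h3 : c * a ^ (κ - 1) = 1 / t0 := by
        rw [haval]; field_simp
      linarith
    set A : ℝ := p.1 * (betaFn p.2.2.1 γl)⁻¹ * u ^ (p.2.2.1 - 1) * (1 - u) ^ (γl - 1) with hAdef
    set B : ℝ := p.2.1 * (betaFn γr p.2.2.2)⁻¹ * u ^ (γr - 1) * (1 - u) ^ (p.2.2.2 - 1)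
      with hBdef
    have hu1' : (0:ℝ) < 1 - u := by linarith
    have hA0 : 0 ≤ A := by
      apply mul_nonneg (mul_nonneg (mul_nonneg hπl.le (by positivity)) _) _ <;> positivity
    have hB0 : 0 ≤ B := by
      apply mul_nonneg (mul_nonneg (mul_nonneg hπr.le (by positivity)) _) _ <;> positivity
    have hmain : 1 / t0 ≤ A + B := by
      rcases hcase with hc' | hc'
      · have hterm := term_lb hεpos hεl hBl hBlm hu0p hc'.le hu0pos (by linarith) hκl hκ1.le
          (by linarith : (1:ℝ)/2 ≤ 1 - u) (le_max_left γl γr) (by linarith : (1:ℝ) ≤ γl)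
        have : c * u0 ^ (κ - 1) ≤ A := by
          rw [hAdef]
          calc c * u0 ^ (κ - 1) = ε * Bm⁻¹ * u0 ^ (κ - 1) * (1/2 : ℝ) ^ (γm - 1) := by ring
            _ ≤ _ := hterm
        linarith
      · have hterm := term_lb hεpos hεr hBr hBrm hu1' (by linarith : 1 - u ≤ u0) hu0pos
          (by linarith) hκr hκ1.le (by linarith : (1:ℝ)/2 ≤ u) (le_max_right γl γr) (by linarith : (1:ℝ) ≤ γr)
        have : c * u0 ^ (κ - 1) ≤ B := by
          rw [hBdef]
          calc c * u0 ^ (κ - 1) = ε * Bm⁻¹ * u0 ^ (κ - 1) * (1/2 : ℝ) ^ (γm - 1) := by ring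
            _ ≤ p.2.1 * (betaFn γr p.2.2.2)⁻¹ * (1 - u) ^ (p.2.2.2 - 1) * u ^ (γr - 1) := hterm
            _ = _ := by ring
        linarith
    have hD : 0 < 1 - p.1 - p.2.1 := by linarith
    have hD1 : 1 - p.1 - p.2.1 ≤ 1 := by linarith
    have hdiv : A + B ≤ (A + B) / (1 - p.1 - p.2.1) :=
      le_div_self (by linarith) hD hD1
    show 1 / t0 ≤ 1 + (A + B) / (1 - p.1 - p.2.1)
    linarith
  refine ⟨u0, ⟨hu0pos, by linarith⟩, ?_⟩
  intro p hp t ht u hu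
  obtain ⟨⟨hup, hu1⟩, hb⟩ := hu
  have h1t : 1 / t ≤ 1 / t0 := one_div_le_one_div_of_le ht0 ht
  constructor
  · by_contra h
    push_neg at h
    have := hkey p hp u hup hu1 (Or.inl h)
    linarith
  · by_contra h
    push_neg at h
    have := hkey p hp u hup hu1 (Or.inr h)
    linarith
end

section
/- Fix γ_l, γ_r > 2 and let B(a,b) = Γ(a)Γ(b)/Γ(a+b) denote the Beta function. Let K be a compact subset of the open region {(π_l, π_r, k_l, k_r) ∈ ℝ⁴ : 0 < π_l, 0 < π_r, π_l + π_r < 1, 0 < k_l < 1, 0 < k_r < 1}, and for p = (π_l, π_r, k_l, k_r) ∈ K let b_p(u) = 1 + (π_l B(k_l, γ_l)^{-1} u^{k_l-1}(1-u)^{γ_l-1} + π_r B(γ_r, k_r)^{-1} u^{γ_r-1}(1-u)^{k_r-1}) / (1 - π_l - π_r) for u ∈ (0,1). Then for every s₀ ∈ (0,1) there exists u₀ ∈ (0, 1/2), not depending on p, such that for all p ∈ K and all real l, r with 0 < l < r < 1, b_p(l) = b_p(r) and r − l ≤ 1 − s₀, one has [l, r] ⊆ [u₀, 1 − u₀]. 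-/
open Set Filter MeasureTheory

namespace LemD1
open Topology

lemma betaFn_pos {a b : ℝ} (ha : 0 < a) (hb : 0 < b) : 0 < betaFn a b :=
  div_pos (mul_pos (Real.Gamma_pos_of_pos ha) (Real.Gamma_pos_of_pos hb))
    (Real.Gamma_pos_of_pos (by linarith))

lemma betaFn_comm (a b : ℝ) : betaFn a b = betaFn b a := by
  unfold betaFn; rw [add_comm]; ring

noncomputable def Afun (γl : ℝ) (p : ℝ × ℝ × ℝ × ℝ) : ℝ :=
  p.1 * (betaFn p.2.2.1 γl)⁻¹ / (1 - p.1 - p.2.1)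

noncomputable def Cfun (γr : ℝ) (p : ℝ × ℝ × ℝ × ℝ) : ℝ :=
  p.2.1 * (betaFn γr p.2.2.2)⁻¹ / (1 - p.1 - p.2.1)

lemma Afun_pos {γl : ℝ} (hγ : 0 < γl) {p : ℝ × ℝ × ℝ × ℝ} (hp : p ∈ paramRegion) :
    0 < Afun γl p := by
  obtain ⟨h1, h2, h3, h4, h5, h6, h7⟩ := hp
  exact div_pos (mul_pos h1 (inv_pos.mpr (betaFn_pos h4 hγ))) (by linarith)

lemma Cfun_pos {γr : ℝ} (hγ : 0 < γr) {p : ℝ × ℝ × ℝ × ℝ} (hp : p ∈ paramRegion) :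
    0 < Cfun γr p := by
  obtain ⟨h1, h2, h3, h4, h5, h6, h7⟩ := hp
  exact div_pos (mul_pos h2 (inv_pos.mpr (betaFn_pos hγ h6))) (by linarith)

lemma bAssessor_decomp (γl γr : ℝ) (p : ℝ × ℝ × ℝ × ℝ) (u : ℝ) :
    bAssessor γl γr p u = 1 + Afun γl p * (u ^ (p.2.2.1 - 1) * (1 - u) ^ (γl - 1))
      + Cfun γr p * (u ^ (γr - 1) * (1 - u) ^ (p.2.2.2 - 1)) := by
  unfold bAssessor Afun Cfun; ring

def swapP (p : ℝ × ℝ × ℝ × ℝ) : ℝ × ℝ × ℝ × ℝ := (p.2.1, p.1, p.2.2.2, p.2.2.1)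

lemma swapP_mem {p : ℝ × ℝ × ℝ × ℝ} (hp : p ∈ paramRegion) : swapP p ∈ paramRegion := by
  obtain ⟨h1, h2, h3, h4, h5, h6, h7⟩ := hp
  refine ⟨h2, h1, by simp only [swapP]; linarith, h6, h7, h4, h5⟩

lemma bAssessor_swap (γl γr : ℝ) (p : ℝ × ℝ × ℝ × ℝ) (u : ℝ) :
    bAssessor γr γl (swapP p) (1 - u) = bAssessor γl γr p u := by
  simp only [bAssessor, swapP, sub_sub_cancel]
  rw [betaFn_comm p.2.2.2 γr, betaFn_comm γl p.2.2.1]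
  ring

lemma half_rpow (y : ℝ) : ((1 : ℝ) / 2) ^ y = (2 : ℝ) ^ (-y) := by
  rw [one_div, Real.inv_rpow (by norm_num : (0:ℝ) ≤ 2), ← Real.rpow_neg (by norm_num : (0:ℝ) ≤ 2)]

lemma two_rpow_one_sub_le {x γ : ℝ} (hγ : 1 ≤ γ) (hx : 1 / 2 ≤ x) :
    (2 : ℝ) ^ (1 - γ) ≤ x ^ (γ - 1) := by
  have h := Real.rpow_le_rpow (by norm_num : (0:ℝ) ≤ 1/2) hx (by linarith : 0 ≤ γ - 1)
  calc (2 : ℝ) ^ (1 - γ) = ((1:ℝ)/2) ^ (γ - 1) := by rw [half_rpow]; congr 1; ring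
  _ ≤ x ^ (γ - 1) := h

lemma bAssessor_hasDeriv (γl γr : ℝ) (p : ℝ × ℝ × ℝ × ℝ) {x : ℝ} (hx : 0 < x) (hx1 : x < 1) :
    HasDerivAt (bAssessor γl γr p)
      (Afun γl p * ((p.2.2.1 - 1) * x ^ (p.2.2.1 - 2) * (1 - x) ^ (γl - 1)
        - (γl - 1) * x ^ (p.2.2.1 - 1) * (1 - x) ^ (γl - 2))
      + Cfun γr p * ((γr - 1) * x ^ (γr - 2) * (1 - x) ^ (p.2.2.2 - 1)
        - (p.2.2.2 - 1) * x ^ (γr - 1) * (1 - x) ^ (p.2.2.2 - 2))) x := by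
  set a := p.2.2.1
  set c := p.2.2.2
  have hx' : x ≠ 0 := ne_of_gt hx
  have h1x : (1 : ℝ) - x ≠ 0 := ne_of_gt (by linarith)
  have hone : HasDerivAt (fun u : ℝ => 1 - u) (-1) x := by
    simpa using (hasDerivAt_id x).const_sub 1
  have hA2 : HasDerivAt (fun u : ℝ => (1 - u) ^ (γl - 1))
      (((γl - 1) * (1 - x) ^ (γl - 1 - 1)) * (-1)) x :=
    (Real.hasDerivAt_rpow_const (Or.inl h1x)).comp x hone
  have hC2 : HasDerivAt (fun u : ℝ => (1 - u) ^ (c - 1))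
      (((c - 1) * (1 - x) ^ (c - 1 - 1)) * (-1)) x :=
    (Real.hasDerivAt_rpow_const (Or.inl h1x)).comp x hone
  have hA1 : HasDerivAt (fun u : ℝ => u ^ (a - 1)) ((a - 1) * x ^ (a - 1 - 1)) x :=
    Real.hasDerivAt_rpow_const (Or.inl hx')
  have hC1 : HasDerivAt (fun u : ℝ => u ^ (γr - 1)) ((γr - 1) * x ^ (γr - 1 - 1)) x :=
    Real.hasDerivAt_rpow_const (Or.inl hx')
  have hP := (hA1.mul hA2).const_mul (Afun γl p)
  have hQ := (hC1.mul hC2).const_mul (Cfun γr p)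
  have total := ((hP.add hQ).const_add 1)
  have hfun : bAssessor γl γr p = (fun u : ℝ => 1 +
      (Afun γl p * (u ^ (a - 1) * (1 - u) ^ (γl - 1)) +
       Cfun γr p * (u ^ (γr - 1) * (1 - u) ^ (c - 1)))) := by
    funext u; rw [bAssessor_decomp]; ring
  rw [hfun]
  refine total.congr_deriv ?_
  rw [show a - 1 - 1 = a - 2 by ring, show γl - 1 - 1 = γl - 2 by ring,
    show γr - 1 - 1 = γr - 2 by ring, show c - 1 - 1 = c - 2 by ring]
  ring

lemma deriv_neg_aux {A Amin C Cmax a amax c γl γr x t0 : ℝ}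
    (hγl : 2 < γl) (hγr : 2 < γr)
    (hAmin : 0 < Amin) (hA : Amin ≤ A) (hC0 : 0 ≤ C) (hC : C ≤ Cmax)
    (ha0 : 0 < a) (ha : a ≤ amax) (hamax : amax < 1)
    (hc0 : 0 < c) (hc1 : c < 1)
    (hx : 0 < x) (hxt : x < t0) (ht : t0 ≤ 1 / 2)
    (hkey : Cmax * (2 * γr + 4) * t0 ^ (γr - amax) < Amin * (1 - amax) * 2 ^ (1 - γl)) :
    A * ((a - 1) * x ^ (a - 2) * (1 - x) ^ (γl - 1)
        - (γl - 1) * x ^ (a - 1) * (1 - x) ^ (γl - 2))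
      + C * ((γr - 1) * x ^ (γr - 2) * (1 - x) ^ (c - 1)
        - (c - 1) * x ^ (γr - 1) * (1 - x) ^ (c - 2)) < 0 := by
  have hx2 : x ≤ 1 / 2 := le_trans hxt.le ht
  have hx1 : x ≤ 1 := by linarith
  have hhx : (1 : ℝ) / 2 ≤ 1 - x := by linarith
  have h1x : (0 : ℝ) < 1 - x := by linarith
  have hA0 : 0 < A := lt_of_lt_of_le hAmin hA
  have hCmax0 : 0 ≤ Cmax := le_trans hC0 hC
  have hP2 : 0 < x ^ (a - 2) := Real.rpow_pos_of_pos hx _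
  have hP1 : 0 < x ^ (a - 1) := Real.rpow_pos_of_pos hx _
  have hQ2 : 0 < x ^ (γr - 2) := Real.rpow_pos_of_pos hx _
  have hQ1 : 0 < x ^ (γr - 1) := Real.rpow_pos_of_pos hx _
  have hY1 : 0 < (1 - x) ^ (γl - 1) := Real.rpow_pos_of_pos h1x _
  have hY2 : 0 < (1 - x) ^ (γl - 2) := Real.rpow_pos_of_pos h1x _
  have hZ1 : 0 < (1 - x) ^ (c - 1) := Real.rpow_pos_of_pos h1x _
  have hZ2 : 0 < (1 - x) ^ (c - 2) := Real.rpow_pos_of_pos h1x _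
  have hW : (0 : ℝ) < (2 : ℝ) ^ (1 - γl) := Real.rpow_pos_of_pos two_pos _
  have hT : (0 : ℝ) < t0 ^ (γr - amax) := Real.rpow_pos_of_pos (lt_trans hx hxt) _
  -- lower bound for (1-x)^(γl-1)
  have hY1' : (2 : ℝ) ^ (1 - γl) ≤ (1 - x) ^ (γl - 1) := two_rpow_one_sub_le (by linarith) hhx
  -- upper bounds for (1-x)^(c-1) and (1-x)^(c-2)
  have hZ1' : (1 - x) ^ (c - 1) ≤ 2 := by
    have h1 : (1 - x) ^ (c - 1) ≤ ((1:ℝ)/2) ^ (c - 1) :=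
      Real.rpow_le_rpow_of_nonpos (by norm_num) hhx (by linarith)
    have h2 : ((1:ℝ)/2) ^ (c - 1) ≤ 2 := by
      rw [half_rpow]
      calc (2:ℝ) ^ (-(c-1)) ≤ (2:ℝ) ^ (1:ℝ) :=
            Real.rpow_le_rpow_of_exponent_le one_le_two (by linarith)
        _ = 2 := Real.rpow_one 2
    linarith
  have hZ2' : (1 - x) ^ (c - 2) ≤ 4 := by
    have h1 : (1 - x) ^ (c - 2) ≤ ((1:ℝ)/2) ^ (c - 2) :=
      Real.rpow_le_rpow_of_nonpos (by norm_num) hhx (by linarith)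
    have h2 : ((1:ℝ)/2) ^ (c - 2) ≤ 4 := by
      rw [half_rpow]
      calc (2:ℝ) ^ (-(c-2)) ≤ (2:ℝ) ^ ((2:ℕ):ℝ) :=
            Real.rpow_le_rpow_of_exponent_le one_le_two (by push_cast; linarith)
        _ = 4 := by rw [Real.rpow_natCast]; norm_num
    linarith
  have hQ12 : x ^ (γr - 1) ≤ x ^ (γr - 2) :=
    Real.rpow_le_rpow_of_exponent_ge hx hx1 (by linarith)
  have hsplit : x ^ (γr - 2) = x ^ (a - 2) * x ^ (γr - a) := by
    rw [← Real.rpow_add hx]; congr 1; ring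
  have hxT : x ^ (γr - a) ≤ t0 ^ (γr - amax) :=
    le_trans (Real.rpow_le_rpow_of_exponent_ge hx hx1 (by linarith))
      (Real.rpow_le_rpow hx.le hxt.le (by linarith))
  -- term 1
  have n1 : A * (a - 1) ≤ Amin * (amax - 1) := by
    nlinarith [mul_nonneg (sub_nonneg.mpr hA) (show (0:ℝ) ≤ 1 - a by linarith),
      mul_nonneg hAmin.le (show (0:ℝ) ≤ amax - a by linarith)]
  have t1 : A * ((a - 1) * x ^ (a - 2) * (1 - x) ^ (γl - 1))
      ≤ -(Amin * (1 - amax) * (2:ℝ) ^ (1 - γl) * x ^ (a - 2)) := by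
    calc A * ((a - 1) * x ^ (a - 2) * (1 - x) ^ (γl - 1))
        = (A * (a - 1)) * (x ^ (a - 2) * (1 - x) ^ (γl - 1)) := by ring
      _ ≤ (Amin * (amax - 1)) * (x ^ (a - 2) * (1 - x) ^ (γl - 1)) :=
          mul_le_mul_of_nonneg_right n1 (by positivity)
      _ ≤ (Amin * (amax - 1)) * (x ^ (a - 2) * (2:ℝ) ^ (1 - γl)) := by
          have hcoef : Amin * (amax - 1) ≤ 0 := by nlinarith
          have hfac : x ^ (a - 2) * (2:ℝ) ^ (1 - γl) ≤ x ^ (a - 2) * (1 - x) ^ (γl - 1) :=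
            mul_le_mul_of_nonneg_left hY1' hP2.le
          exact mul_le_mul_of_nonpos_left hfac hcoef
      _ = -(Amin * (1 - amax) * (2:ℝ) ^ (1 - γl) * x ^ (a - 2)) := by ring
  have t2 : 0 ≤ A * ((γl - 1) * x ^ (a - 1) * (1 - x) ^ (γl - 2)) :=
    mul_nonneg hA0.le
      (mul_nonneg (mul_nonneg (by linarith) hP1.le) hY2.le)
  have t3 : C * ((γr - 1) * x ^ (γr - 2) * (1 - x) ^ (c - 1))
      ≤ Cmax * (2 * (γr - 1)) * x ^ (γr - 2) := by
    calc C * ((γr - 1) * x ^ (γr - 2) * (1 - x) ^ (c - 1))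
        = (C * (γr - 1)) * (x ^ (γr - 2) * (1 - x) ^ (c - 1)) := by ring
      _ ≤ (Cmax * (γr - 1)) * (x ^ (γr - 2) * 2) := by
          apply mul_le_mul
          · exact mul_le_mul_of_nonneg_right hC (by linarith)
          · exact mul_le_mul_of_nonneg_left hZ1' hQ2.le
          · positivity
          · exact mul_nonneg hCmax0 (by linarith)
      _ = Cmax * (2 * (γr - 1)) * x ^ (γr - 2) := by ring
  have t4 : -(C * ((c - 1) * x ^ (γr - 1) * (1 - x) ^ (c - 2)))
      ≤ Cmax * 4 * x ^ (γr - 2) := by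
    calc -(C * ((c - 1) * x ^ (γr - 1) * (1 - x) ^ (c - 2)))
        = (C * (1 - c)) * (x ^ (γr - 1) * (1 - x) ^ (c - 2)) := by ring
      _ ≤ Cmax * (x ^ (γr - 2) * 4) := by
          apply mul_le_mul
          · calc C * (1 - c) ≤ Cmax * 1 :=
                  mul_le_mul hC (by linarith) (by linarith) hCmax0
              _ = Cmax := mul_one _
          · exact mul_le_mul hQ12 hZ2' hZ2.le hQ2.le
          · positivity
          · exact hCmax0
      _ = Cmax * 4 * x ^ (γr - 2) := by ring
  have hxq : x ^ (γr - 2) ≤ x ^ (a - 2) * t0 ^ (γr - amax) := by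
    rw [hsplit]; exact mul_le_mul_of_nonneg_left hxT hP2.le
  have t5 : Cmax * (2 * (γr - 1)) * x ^ (γr - 2) + Cmax * 4 * x ^ (γr - 2)
      ≤ Cmax * (2 * γr + 4) * (x ^ (a - 2) * t0 ^ (γr - amax)) := by
    have h1 : Cmax * (2 * (γr - 1)) * x ^ (γr - 2) + Cmax * 4 * x ^ (γr - 2)
        = Cmax * (2 * γr + 2) * x ^ (γr - 2) := by ring
    rw [h1]
    calc Cmax * (2 * γr + 2) * x ^ (γr - 2)
        ≤ Cmax * (2 * γr + 2) * (x ^ (a - 2) * t0 ^ (γr - amax)) :=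
          mul_le_mul_of_nonneg_left hxq (mul_nonneg hCmax0 (by linarith))
      _ ≤ Cmax * (2 * γr + 4) * (x ^ (a - 2) * t0 ^ (γr - amax)) :=
          mul_le_mul_of_nonneg_right
            (mul_le_mul_of_nonneg_left (by linarith) hCmax0)
            (mul_nonneg hP2.le hT.le)
  have key2 : Cmax * (2 * γr + 4) * (x ^ (a - 2) * t0 ^ (γr - amax))
      < Amin * (1 - amax) * (2:ℝ) ^ (1 - γl) * x ^ (a - 2) := by
    have := mul_lt_mul_of_pos_right hkey hP2
    linarith [this]
  linarith [t1, t2, t3, t4, t5, key2]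

lemma bAssessor_strictAntiOn (γl γr : ℝ) (hγl : 2 < γl) (hγr : 2 < γr)
    {p : ℝ × ℝ × ℝ × ℝ} (hp : p ∈ paramRegion)
    {Amin Cmax amax t0 : ℝ} (hAmin : 0 < Amin) (hA : Amin ≤ Afun γl p)
    (hC : Cfun γr p ≤ Cmax) (ha : p.2.2.1 ≤ amax) (hamax : amax < 1)
    (ht0 : 0 < t0) (ht : t0 ≤ 1 / 2)
    (hkey : Cmax * (2 * γr + 4) * t0 ^ (γr - amax) < Amin * (1 - amax) * 2 ^ (1 - γl)) :
    StrictAntiOn (bAssessor γl γr p) (Set.Ioc 0 t0) := by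
  obtain ⟨h1, h2, h3, h4, h5, h6, h7⟩ := hp
  have hreg : p ∈ paramRegion := ⟨h1, h2, h3, h4, h5, h6, h7⟩
  apply strictAntiOn_of_deriv_neg (convex_Ioc 0 t0)
  · intro u hu
    exact (bAssessor_hasDeriv γl γr p hu.1
      (lt_of_le_of_lt hu.2 (by linarith))).continuousAt.continuousWithinAt
  · intro x hx
    rw [interior_Ioc] at hx
    rw [(bAssessor_hasDeriv γl γr p hx.1 (lt_of_lt_of_le hx.2 (by linarith))).deriv]
    exact deriv_neg_aux hγl hγr hAmin hA (Cfun_pos (by linarith) hreg).le hC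
      h4 ha hamax h6 h7 hx.1 hx.2 ht hkey

lemma gamma_contAt {x : ℝ} (hx : 0 < x) : ContinuousAt Real.Gamma x :=
  (Real.differentiableAt_Gamma (fun m => by
    have : (0:ℝ) ≤ m := Nat.cast_nonneg m
    exact ne_of_gt (by linarith))).continuousAt

lemma contAt_betaFn₁ {γ x : ℝ} (hγ : 0 < γ) (hx : 0 < x) :
    ContinuousAt (fun a => betaFn a γ) x := by
  have hf : ContinuousAt (fun a : ℝ => a + γ) x := by fun_prop
  have h2 : ContinuousAt (Real.Gamma ∘ fun a : ℝ => a + γ) x :=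
    ContinuousAt.comp (g := Real.Gamma) (f := fun a : ℝ => a + γ)
      (gamma_contAt (by linarith : (0:ℝ) < x + γ)) hf
  have h2' : ContinuousAt (fun a : ℝ => Real.Gamma (a + γ)) x := h2
  have h1 : ContinuousAt (fun a : ℝ => Real.Gamma a * Real.Gamma γ) x :=
    (gamma_contAt hx).mul continuousAt_const
  exact h1.div h2' (ne_of_gt (Real.Gamma_pos_of_pos (by linarith)))

lemma contAt_betaFn₂ {γ x : ℝ} (hγ : 0 < γ) (hx : 0 < x) :
    ContinuousAt (fun c => betaFn γ c) x := by
  have hf : ContinuousAt (fun c : ℝ => γ + c) x := by fun_prop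
  have h2 : ContinuousAt (Real.Gamma ∘ fun c : ℝ => γ + c) x :=
    ContinuousAt.comp (g := Real.Gamma) (f := fun c : ℝ => γ + c)
      (gamma_contAt (by linarith : (0:ℝ) < γ + x)) hf
  have h2' : ContinuousAt (fun c : ℝ => Real.Gamma (γ + c)) x := h2
  have h1 : ContinuousAt (fun c : ℝ => Real.Gamma γ * Real.Gamma c) x :=
    continuousAt_const.mul (gamma_contAt hx)
  exact h1.div h2' (ne_of_gt (Real.Gamma_pos_of_pos (by linarith)))

lemma contOn_Afun (γl : ℝ) (hγ : 0 < γl) {K : Set (ℝ × ℝ × ℝ × ℝ)}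
    (hKsub : K ⊆ paramRegion) : ContinuousOn (Afun γl) K := by
  intro p hp
  obtain ⟨h1, h2, h3, h4, h5, h6, h7⟩ := hKsub hp
  apply ContinuousAt.continuousWithinAt
  unfold Afun
  have hproj : ContinuousAt (fun p : ℝ × ℝ × ℝ × ℝ => p.2.2.1) p := by fun_prop
  have hb : ContinuousAt ((fun a => betaFn a γl) ∘ fun p : ℝ × ℝ × ℝ × ℝ => p.2.2.1) p :=
    ContinuousAt.comp (g := fun a => betaFn a γl) (f := fun p : ℝ × ℝ × ℝ × ℝ => p.2.2.1)
      (contAt_betaFn₁ hγ h4) hproj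
  have hb' : ContinuousAt (fun p : ℝ × ℝ × ℝ × ℝ => betaFn p.2.2.1 γl) p := hb
  have hnum : ContinuousAt (fun p : ℝ × ℝ × ℝ × ℝ => p.1 * (betaFn p.2.2.1 γl)⁻¹) p :=
    continuous_fst.continuousAt.mul (hb'.inv₀ (ne_of_gt (betaFn_pos h4 hγ)))
  have hden : ContinuousAt (fun p : ℝ × ℝ × ℝ × ℝ => 1 - p.1 - p.2.1) p := by fun_prop
  exact hnum.div hden (ne_of_gt (by linarith : (0:ℝ) < 1 - p.1 - p.2.1))

lemma contOn_Cfun (γr : ℝ) (hγ : 0 < γr) {K : Set (ℝ × ℝ × ℝ × ℝ)}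
    (hKsub : K ⊆ paramRegion) : ContinuousOn (Cfun γr) K := by
  intro p hp
  obtain ⟨h1, h2, h3, h4, h5, h6, h7⟩ := hKsub hp
  apply ContinuousAt.continuousWithinAt
  unfold Cfun
  have hproj : ContinuousAt (fun p : ℝ × ℝ × ℝ × ℝ => p.2.2.2) p := by fun_prop
  have hb : ContinuousAt ((fun c => betaFn γr c) ∘ fun p : ℝ × ℝ × ℝ × ℝ => p.2.2.2) p :=
    ContinuousAt.comp (g := fun c => betaFn γr c) (f := fun p : ℝ × ℝ × ℝ × ℝ => p.2.2.2)
      (contAt_betaFn₂ hγ h6) hproj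
  have hb' : ContinuousAt (fun p : ℝ × ℝ × ℝ × ℝ => betaFn γr p.2.2.2) p := hb
  have hproj2 : ContinuousAt (fun p : ℝ × ℝ × ℝ × ℝ => p.2.1) p := by fun_prop
  have hnum : ContinuousAt (fun p : ℝ × ℝ × ℝ × ℝ => p.2.1 * (betaFn γr p.2.2.2)⁻¹) p :=
    hproj2.mul (hb'.inv₀ (ne_of_gt (betaFn_pos hγ h6)))
  have hden : ContinuousAt (fun p : ℝ × ℝ × ℝ × ℝ => 1 - p.1 - p.2.1) p := by fun_prop
  exact hnum.div hden (ne_of_gt (by linarith : (0:ℝ) < 1 - p.1 - p.2.1))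

lemma contOn_bAssessor (γl γr : ℝ) (hγl : 0 < γl) (hγr : 0 < γr)
    {K : Set (ℝ × ℝ × ℝ × ℝ)} (hKsub : K ⊆ paramRegion) {t1 t2 : ℝ}
    (ht1 : 0 < t1) (ht2 : t2 < 1) :
    ContinuousOn (fun q : (ℝ × ℝ × ℝ × ℝ) × ℝ => bAssessor γl γr q.1 q.2)
      (K ×ˢ Set.Icc t1 t2) := by
  rintro ⟨p, u⟩ ⟨hp, hu⟩
  obtain ⟨h1, h2, h3, h4, h5, h6, h7⟩ := hKsub hp
  have hu0 : 0 < u := lt_of_lt_of_le ht1 hu.1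
  have hu1 : u < 1 := lt_of_le_of_lt hu.2 ht2
  apply ContinuousAt.continuousWithinAt
  unfold bAssessor
  have c_pi1 : ContinuousAt (fun q : (ℝ × ℝ × ℝ × ℝ) × ℝ => q.1.1) (p, u) := by fun_prop
  have c_pi2 : ContinuousAt (fun q : (ℝ × ℝ × ℝ × ℝ) × ℝ => q.1.2.1) (p, u) := by fun_prop
  have c_a : ContinuousAt (fun q : (ℝ × ℝ × ℝ × ℝ) × ℝ => q.1.2.2.1) (p, u) := by fun_prop
  have c_c : ContinuousAt (fun q : (ℝ × ℝ × ℝ × ℝ) × ℝ => q.1.2.2.2) (p, u) := by fun_prop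
  have c_u : ContinuousAt (fun q : (ℝ × ℝ × ℝ × ℝ) × ℝ => q.2) (p, u) := by fun_prop
  have c_1u : ContinuousAt (fun q : (ℝ × ℝ × ℝ × ℝ) × ℝ => 1 - q.2) (p, u) := by fun_prop
  have hbb1 : ContinuousAt ((fun a => betaFn a γl) ∘ fun q : (ℝ × ℝ × ℝ × ℝ) × ℝ => q.1.2.2.1)
      (p, u) := ContinuousAt.comp (g := fun a => betaFn a γl)
        (f := fun q : (ℝ × ℝ × ℝ × ℝ) × ℝ => q.1.2.2.1) (contAt_betaFn₁ hγl h4) c_a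
  have hbb1' : ContinuousAt (fun q : (ℝ × ℝ × ℝ × ℝ) × ℝ => betaFn q.1.2.2.1 γl) (p, u) := hbb1
  have c_beta1 : ContinuousAt (fun q : (ℝ × ℝ × ℝ × ℝ) × ℝ => (betaFn q.1.2.2.1 γl)⁻¹) (p, u) :=
    hbb1'.inv₀ (ne_of_gt (betaFn_pos h4 hγl))
  have hbb2 : ContinuousAt ((fun c => betaFn γr c) ∘ fun q : (ℝ × ℝ × ℝ × ℝ) × ℝ => q.1.2.2.2)
      (p, u) := ContinuousAt.comp (g := fun c => betaFn γr c)
        (f := fun q : (ℝ × ℝ × ℝ × ℝ) × ℝ => q.1.2.2.2) (contAt_betaFn₂ hγr h6) c_c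
  have hbb2' : ContinuousAt (fun q : (ℝ × ℝ × ℝ × ℝ) × ℝ => betaFn γr q.1.2.2.2) (p, u) := hbb2
  have c_beta2 : ContinuousAt (fun q : (ℝ × ℝ × ℝ × ℝ) × ℝ => (betaFn γr q.1.2.2.2)⁻¹) (p, u) :=
    hbb2'.inv₀ (ne_of_gt (betaFn_pos hγr h6))
  have c_r1 : ContinuousAt (fun q : (ℝ × ℝ × ℝ × ℝ) × ℝ => q.2 ^ (q.1.2.2.1 - 1)) (p, u) :=
    c_u.rpow (c_a.sub continuousAt_const) (Or.inl hu0.ne')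
  have c_r2 : ContinuousAt (fun q : (ℝ × ℝ × ℝ × ℝ) × ℝ => (1 - q.2) ^ (γl - 1)) (p, u) :=
    c_1u.rpow continuousAt_const (Or.inl (ne_of_gt (by linarith : (0:ℝ) < 1 - u)))
  have c_r3 : ContinuousAt (fun q : (ℝ × ℝ × ℝ × ℝ) × ℝ => q.2 ^ (γr - 1)) (p, u) :=
    c_u.rpow continuousAt_const (Or.inl hu0.ne')
  have c_r4 : ContinuousAt (fun q : (ℝ × ℝ × ℝ × ℝ) × ℝ => (1 - q.2) ^ (q.1.2.2.2 - 1)) (p, u) :=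
    c_1u.rpow (c_c.sub continuousAt_const) (Or.inl (ne_of_gt (by linarith : (0:ℝ) < 1 - u)))
  have hnum : ContinuousAt (fun q : (ℝ × ℝ × ℝ × ℝ) × ℝ =>
      q.1.1 * (betaFn q.1.2.2.1 γl)⁻¹ * q.2 ^ (q.1.2.2.1 - 1) * (1 - q.2) ^ (γl - 1)
      + q.1.2.1 * (betaFn γr q.1.2.2.2)⁻¹ * q.2 ^ (γr - 1) * (1 - q.2) ^ (q.1.2.2.2 - 1))
      (p, u) :=
    ((((c_pi1.mul c_beta1).mul c_r1).mul c_r2).add (((c_pi2.mul c_beta2).mul c_r3).mul c_r4))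
  have hden : ContinuousAt (fun q : (ℝ × ℝ × ℝ × ℝ) × ℝ => 1 - q.1.1 - q.1.2.1) (p, u) := by
    fun_prop
  exact continuousAt_const.add
    (hnum.div hden (ne_of_gt (by linarith : (0:ℝ) < 1 - p.1 - p.2.1)))

lemma left_bound (γl γr : ℝ) (hγl : 2 < γl) (hγr : 2 < γr)
    (K : Set (ℝ × ℝ × ℝ × ℝ)) (hK : IsCompact K) (hKsub : K ⊆ paramRegion)
    {s0 : ℝ} (hs0 : s0 ∈ Set.Ioo (0 : ℝ) 1) :
    ∃ u0 ∈ Set.Ioo (0 : ℝ) (1 / 2), ∀ p ∈ K, ∀ l r : ℝ, 0 < l → l < r → r < 1 →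
      bAssessor γl γr p l = bAssessor γl γr p r → r - l ≤ 1 - s0 → u0 ≤ l := by
  obtain ⟨hs01, hs02⟩ := hs0
  rcases K.eq_empty_or_nonempty with hKe | hne
  · exact ⟨1/4, by norm_num, fun p hp => by rw [hKe] at hp; exact absurd hp (notMem_empty p)⟩
  -- extremal constants over K
  obtain ⟨pA, hpA, hminA⟩ := hK.exists_isMinOn hne (contOn_Afun γl (by linarith) hKsub)
  set Amin := Afun γl pA with hAmindef
  have hAmin : 0 < Amin := Afun_pos (by linarith) (hKsub hpA)
  have hAminle : ∀ p ∈ K, Amin ≤ Afun γl p := fun p hp => hminA hp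
  obtain ⟨pC, hpC, hmaxC⟩ := hK.exists_isMaxOn hne (contOn_Cfun γr (by linarith) hKsub)
  set Cmax := Cfun γr pC with hCmaxdef
  have hCmaxle : ∀ p ∈ K, Cfun γr p ≤ Cmax := fun p hp => hmaxC hp
  have hCmax0 : 0 ≤ Cmax := (Cfun_pos (by linarith) (hKsub hpC)).le
  obtain ⟨pa, hpa, hmaxa⟩ := hK.exists_isMaxOn hne
    ((by fun_prop : Continuous fun p : ℝ × ℝ × ℝ × ℝ => p.2.2.1).continuousOn)
  set amax := pa.2.2.1 with hamaxdef
  have hamaxle : ∀ p ∈ K, p.2.2.1 ≤ amax := fun p hp => hmaxa hp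
  have hamax1 : amax < 1 := (hKsub hpa).2.2.2.2.1
  have hamax0 : 0 < amax := (hKsub hpa).2.2.2.1
  -- choose t0
  have hκ : 0 < γr - amax := by linarith
  have hK1 : 0 < Amin * (1 - amax) * (2:ℝ) ^ (1 - γl) :=
    mul_pos (mul_pos hAmin (by linarith)) (Real.rpow_pos_of_pos two_pos _)
  have hK2 : 0 < Cmax * (2 * γr + 4) + 1 := by nlinarith
  set ε := (Amin * (1 - amax) * (2:ℝ) ^ (1 - γl)) / (Cmax * (2 * γr + 4) + 1) with hεdef
  have hεpos : 0 < ε := div_pos hK1 hK2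
  set t0 := min ((min ε 1 / 2) ^ (γr - amax)⁻¹) (1/2) with ht0def
  have hminε : 0 < min ε 1 / 2 := by
    have := lt_min hεpos one_pos; linarith
  have ht0pos : 0 < t0 := lt_min (Real.rpow_pos_of_pos hminε _) (by norm_num)
  have ht0half : t0 ≤ 1/2 := min_le_right _ _
  have ht0key : Cmax * (2 * γr + 4) * t0 ^ (γr - amax)
      < Amin * (1 - amax) * (2:ℝ) ^ (1 - γl) := by
    have h1 : t0 ^ (γr - amax) ≤ ((min ε 1 / 2) ^ (γr - amax)⁻¹) ^ (γr - amax) :=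
      Real.rpow_le_rpow ht0pos.le (min_le_left _ _) hκ.le
    rw [Real.rpow_inv_rpow hminε.le (ne_of_gt hκ)] at h1
    have h2 : t0 ^ (γr - amax) < ε := by
      have : min ε 1 / 2 < ε := by
        have := min_le_left ε 1; linarith
      linarith
    have h3 : Cmax * (2 * γr + 4) * t0 ^ (γr - amax)
        ≤ (Cmax * (2 * γr + 4) + 1) * t0 ^ (γr - amax) := by
      have := Real.rpow_pos_of_pos ht0pos (γr - amax); nlinarith
    have h4 : (Cmax * (2 * γr + 4) + 1) * t0 ^ (γr - amax)
        < (Cmax * (2 * γr + 4) + 1) * ε := mul_lt_mul_of_pos_left h2 hK2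
    have h5 : (Cmax * (2 * γr + 4) + 1) * ε = Amin * (1 - amax) * (2:ℝ) ^ (1 - γl) := by
      rw [hεdef, mul_div_cancel₀ _ (ne_of_gt hK2)]
    linarith
  -- sup of bAssessor on K × [t0, 1 - s0/2]
  have hJne : (Set.Icc t0 (1 - s0/2)).Nonempty := Set.nonempty_Icc.mpr (by linarith)
  obtain ⟨qM, hqM, hmaxM⟩ := (hK.prod isCompact_Icc).exists_isMaxOn (hne.prod hJne)
    (contOn_bAssessor γl γr (by linarith) (by linarith) hKsub ht0pos (by linarith))
  set M := bAssessor γl γr qM.1 qM.2 with hMdef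
  have hMle : ∀ p ∈ K, ∀ u ∈ Set.Icc t0 (1 - s0/2), bAssessor γl γr p u ≤ M :=
    fun p hp u hu => hmaxM (Set.mk_mem_prod hp hu)
  -- choose u0
  have htend : Tendsto (fun u : ℝ => 1 + Amin * (2:ℝ) ^ (1 - γl) * u ^ (amax - 1))
      (𝓝[>] (0:ℝ)) atTop := by
    have h1 : Tendsto (fun u : ℝ => u ^ (amax - 1)) (𝓝[>] (0:ℝ)) atTop := by
      have h2 := (tendsto_rpow_atTop (show (0:ℝ) < 1 - amax by linarith)).comp
        tendsto_inv_nhdsGT_zero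
      refine h2.congr' ?_
      filter_upwards [self_mem_nhdsWithin] with u hu
      have hu0 : 0 < u := hu
      show (u⁻¹) ^ (1 - amax) = u ^ (amax - 1)
      rw [Real.inv_rpow hu0.le, ← Real.rpow_neg hu0.le]
      congr 1; ring
    exact tendsto_atTop_add_const_left _ 1
      (h1.const_mul_atTop (mul_pos hAmin (Real.rpow_pos_of_pos two_pos _)))
  have hev1 : ∀ᶠ u in 𝓝[>] (0:ℝ), M < 1 + Amin * (2:ℝ) ^ (1 - γl) * u ^ (amax - 1) :=
    htend.eventually_gt_atTop M
  have hδ : (0:ℝ) < min t0 (s0/2) := lt_min ht0pos (by linarith)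
  have hev2 : ∀ᶠ u in 𝓝[>] (0:ℝ), u ∈ Set.Ioo (0:ℝ) (min t0 (s0/2)) :=
    eventually_of_mem (Ioo_mem_nhdsGT_of_mem ⟨le_refl 0, hδ⟩) (fun u hu => hu)
  obtain ⟨u0, hu0M, hu0mem⟩ := (hev1.and hev2).exists
  obtain ⟨hu0pos, hu0lt⟩ := hu0mem
  have hu0t0 : u0 < t0 := lt_of_lt_of_le hu0lt (min_le_left _ _)
  have hu0s0 : u0 < s0/2 := lt_of_lt_of_le hu0lt (min_le_right _ _)
  refine ⟨u0, ⟨hu0pos, by linarith⟩, ?_⟩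
  intro p hp l r hl hlr hr1 heq hlen
  by_contra hcon
  push_neg at hcon
  rcases le_or_gt r t0 with hrt | hrt
  · -- both in (0, t0]: strict antitonicity
    have hanti := bAssessor_strictAntiOn γl γr hγl hγr (hKsub hp) hAmin
      (hAminle p hp) (hCmaxle p hp) (hamaxle p hp) hamax1 ht0pos ht0half ht0key
    exact (ne_of_gt (hanti ⟨hl, by linarith⟩ ⟨by linarith, hrt⟩ hlr)) heq
  · -- r in [t0, 1 - s0/2]
    have hrJ : r ∈ Set.Icc t0 (1 - s0/2) := ⟨hrt.le, by linarith⟩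
    have hbr : bAssessor γl γr p r ≤ M := hMle p hp r hrJ
    have hbl : 1 + Amin * (2:ℝ) ^ (1 - γl) * u0 ^ (amax - 1) ≤ bAssessor γl γr p l := by
      rw [bAssessor_decomp]
      have hl1 : l < 1 := by linarith
      have hCg : 0 ≤ Cfun γr p * (l ^ (γr - 1) * (1 - l) ^ (p.2.2.2 - 1)) :=
        mul_nonneg (Cfun_pos (by linarith) (hKsub hp)).le
          (mul_nonneg (Real.rpow_pos_of_pos hl _).le
            (Real.rpow_pos_of_pos (by linarith) _).le)
      have hbase : u0 ^ (amax - 1) ≤ l ^ (p.2.2.1 - 1) := by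
        have s1 : u0 ^ (amax - 1) ≤ l ^ (amax - 1) :=
          Real.rpow_le_rpow_of_nonpos hl hcon.le (by linarith)
        have s2 : l ^ (amax - 1) ≤ l ^ (p.2.2.1 - 1) :=
          Real.rpow_le_rpow_of_exponent_ge hl (by linarith)
            (by have := hamaxle p hp; linarith)
        linarith
      have hy : (2:ℝ) ^ (1 - γl) ≤ (1 - l) ^ (γl - 1) :=
        two_rpow_one_sub_le (by linarith) (by linarith)
      have hAf : Amin * (2:ℝ) ^ (1 - γl) * u0 ^ (amax - 1)
          ≤ Afun γl p * (l ^ (p.2.2.1 - 1) * (1 - l) ^ (γl - 1)) := by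
        calc Amin * (2:ℝ) ^ (1 - γl) * u0 ^ (amax - 1)
            = Amin * (u0 ^ (amax - 1) * (2:ℝ) ^ (1 - γl)) := by ring
          _ ≤ Afun γl p * (l ^ (p.2.2.1 - 1) * (1 - l) ^ (γl - 1)) := by
              apply mul_le_mul (hAminle p hp)
              · exact mul_le_mul hbase hy (Real.rpow_pos_of_pos two_pos _).le
                  (Real.rpow_pos_of_pos hl _).le
              · exact mul_nonneg (Real.rpow_pos_of_pos hu0pos _).le
                  (Real.rpow_pos_of_pos two_pos _).le
              · exact (Afun_pos (by linarith) (hKsub hp)).le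
      linarith
    have heqM : bAssessor γl γr p l ≤ M := heq ▸ hbr
    linarith

end LemD1

/-- Lemma D.1(ii): level intervals `[l, r]` of `b_p` with `b_p(l) = b_p(r)` and length at
most `1 - s₀` stay uniformly inside a compact subinterval `[u₀, 1 - u₀]` of (0,1),
uniformly over a compact parameter set `K`. -/
theorem level_intervals_uniformly_interior (γl γr : ℝ) (hγl : 2 < γl) (hγr : 2 < γr)
    (K : Set (ℝ × ℝ × ℝ × ℝ)) (hK : IsCompact K) (hKsub : K ⊆ paramRegion) :
    ∀ s0 ∈ Set.Ioo (0 : ℝ) 1,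
      ∃ u0 ∈ Set.Ioo (0 : ℝ) (1 / 2), ∀ p ∈ K, ∀ l r : ℝ,
        0 < l → l < r → r < 1 →
        bAssessor γl γr p l = bAssessor γl γr p r → r - l ≤ 1 - s0 →
        Set.Icc l r ⊆ Set.Icc u0 (1 - u0) := by
  intro s0 hs0
  obtain ⟨u1, hu1, H1⟩ := LemD1.left_bound γl γr hγl hγr K hK hKsub hs0
  have hswapK : IsCompact (LemD1.swapP '' K) :=
    hK.image (by unfold LemD1.swapP; fun_prop)
  have hswapsub : LemD1.swapP '' K ⊆ paramRegion := by
    rintro _ ⟨p, hp, rfl⟩; exact LemD1.swapP_mem (hKsub hp)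
  obtain ⟨u2, hu2, H2⟩ := LemD1.left_bound γr γl hγr hγl (LemD1.swapP '' K)
    hswapK hswapsub hs0
  refine ⟨min u1 u2, ⟨lt_min hu1.1 hu2.1, lt_of_le_of_lt (min_le_left _ _) hu1.2⟩, ?_⟩
  intro p hp l r hl hlr hr1 heq hlen x hx
  have h1 : u1 ≤ l := H1 p hp l r hl hlr hr1 heq hlen
  have heq' : bAssessor γr γl (LemD1.swapP p) (1 - r) = bAssessor γr γl (LemD1.swapP p) (1 - l) :=
    (LemD1.bAssessor_swap γl γr p r).trans (heq.symm.trans (LemD1.bAssessor_swap γl γr p l).symm)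
  have h2 : u2 ≤ 1 - r := H2 (LemD1.swapP p) (Set.mem_image_of_mem _ hp) (1 - r) (1 - l)
    (by linarith) (by linarith) (by linarith) heq' (by linarith)
  exact ⟨le_trans (min_le_left _ _) (le_trans h1 hx.1),
    le_trans hx.2 (by have := min_le_right u1 u2; linarith)⟩
end

section
/- Fix γ_l, γ_r > 2 and let B(a,b) = Γ(a)Γ(b)/Γ(a+b) denote the Beta function. Let K be a compact subset of the open region {(π_l, π_r, k_l, k_r) ∈ ℝ⁴ : 0 < π_l, 0 < π_r, π_l + π_r < 1, 0 < k_l < 1, 0 < k_r < 1}, and for p = (π_l, π_r, k_l, k_r) ∈ K let b_p(u) = 1 + (π_l B(k_l, γ_l)^{-1} u^{k_l-1}(1-u)^{γ_l-1} + π_r B(γ_r, k_r)^{-1} u^{γ_r-1}(1-u)^{k_r-1}) / (1 - π_l - π_r) for u ∈ (0,1). Then there exists u₀ ∈ (0, 1/2) such that for every p ∈ K, the unique minimizer u*_p ∈ (0,1) of b_p satisfies u₀ ≤ u*_p ≤ 1 − u₀. -/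
open Set Filter MeasureTheory

lemma gamma_contOn {f : ℝ × ℝ × ℝ × ℝ → ℝ} (hf : Continuous f) {S : Set (ℝ × ℝ × ℝ × ℝ)}
    (h : ∀ p ∈ S, 0 < f p) : ContinuousOn (fun p => Real.Gamma (f p)) S := by
  intro p hp
  have hd : DifferentiableAt ℝ Real.Gamma (f p) := by
    apply Real.differentiableAt_Gamma
    intro m
    have := h p hp
    have hm : -(m:ℝ) ≤ 0 := by simp [Nat.cast_nonneg]
    linarith [this]
  exact (hd.continuousAt.comp hf.continuousAt).continuousWithinAt

lemma betaFn_contOn {S : Set (ℝ × ℝ × ℝ × ℝ)} (γ : ℝ) (hγ : 0 < γ)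
    (hS : ∀ p ∈ S, 0 < p.2.2.1) :
    ContinuousOn (fun p => betaFn p.2.2.1 γ) S := by
  unfold betaFn
  apply ContinuousOn.div
  · exact (gamma_contOn (by fun_prop) hS).mul continuousOn_const
  · exact gamma_contOn (f := fun p => p.2.2.1 + γ) (by fun_prop)
      (fun p hp => show (0:ℝ) < p.2.2.1 + γ by linarith [hS p hp])
  · intro p hp
    exact (Real.Gamma_pos_of_pos (by linarith [hS p hp] : (0:ℝ) < p.2.2.1 + γ)).ne'

lemma betaFn_contOn' {S : Set (ℝ × ℝ × ℝ × ℝ)} (γ : ℝ) (hγ : 0 < γ)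
    (hS : ∀ p ∈ S, 0 < p.2.2.2) :
    ContinuousOn (fun p => betaFn γ p.2.2.2) S := by
  unfold betaFn
  apply ContinuousOn.div
  · exact continuousOn_const.mul (gamma_contOn (by fun_prop) hS)
  · exact gamma_contOn (f := fun p => γ + p.2.2.2) (by fun_prop)
      (fun p hp => show (0:ℝ) < γ + p.2.2.2 by linarith [hS p hp])
  · intro p hp
    exact (Real.Gamma_pos_of_pos (by linarith [hS p hp] : (0:ℝ) < γ + p.2.2.2)).ne'

/-- half-power bound: `(1/2) ^ (k-1) ≤ 2` for `0 ≤ k ≤ 1`. -/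
lemma half_rpow_le_two {k : ℝ} (hk : 0 ≤ k) : ((1:ℝ)/2) ^ (k - 1) ≤ 2 := by
  have heq : ((1:ℝ)/2) ^ (k - 1) = 2 ^ (1 - k) := by
    rw [one_div, Real.inv_rpow (by norm_num : (0:ℝ) ≤ 2), ← Real.rpow_neg (by norm_num)]
    ring_nf
  rw [heq]
  calc (2:ℝ) ^ (1 - k) ≤ 2 ^ (1:ℝ) :=
        Real.rpow_le_rpow_of_exponent_le (by norm_num) (by linarith)
    _ = 2 := Real.rpow_one 2

set_option maxHeartbeats 2000000 in
/-- Lemma D.1(iii): the unique minimizers `u*_p` of the reciprocal assessors stay uniformly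
inside a compact subinterval `[u₀, 1 - u₀]` of (0,1), uniformly over a compact parameter
set `K`. -/
theorem minimizers_uniformly_interior (γl γr : ℝ) (hγl : 2 < γl) (hγr : 2 < γr)
    (K : Set (ℝ × ℝ × ℝ × ℝ)) (hK : IsCompact K) (hKsub : K ⊆ paramRegion) :
    ∃ u0 ∈ Set.Ioo (0 : ℝ) (1 / 2), ∀ p ∈ K, ∀ ustar ∈ Set.Ioo (0 : ℝ) 1,
      (∀ u ∈ Set.Ioo (0 : ℝ) 1, u ≠ ustar →
        bAssessor γl γr p ustar < bAssessor γl γr p u) →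
      ustar ∈ Set.Icc u0 (1 - u0) := by
  rcases K.eq_empty_or_nonempty with rfl | hne
  · exact ⟨1/4, by norm_num, fun p hp => absurd hp (Set.notMem_empty p)⟩
  have hreg : ∀ p ∈ K, 0 < p.1 ∧ 0 < p.2.1 ∧ p.1 + p.2.1 < 1 ∧
      0 < p.2.2.1 ∧ p.2.2.1 < 1 ∧ 0 < p.2.2.2 ∧ p.2.2.2 < 1 := fun p hp => hKsub hp
  -- uniform margin ε
  have hgc : ContinuousOn (fun p : ℝ × ℝ × ℝ × ℝ => min p.1 (min p.2.1 (min (1 - p.1 - p.2.1)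
      (min p.2.2.1 (min (1 - p.2.2.1) (min p.2.2.2 (1 - p.2.2.2))))))) K := by
    apply Continuous.continuousOn; fun_prop
  obtain ⟨q, hqK, hq⟩ := hK.exists_isMinOn hne hgc
  obtain ⟨ε, hεdef⟩ : ∃ ε : ℝ, ε = min q.1 (min q.2.1 (min (1 - q.1 - q.2.1)
      (min q.2.2.1 (min (1 - q.2.2.1) (min q.2.2.2 (1 - q.2.2.2)))))) := ⟨_, rfl⟩
  have hε : 0 < ε := by
    obtain ⟨h1, h2, h3, h4, h5, h6, h7⟩ := hreg q hqK
    rw [hεdef]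
    simp only [lt_min_iff]
    exact ⟨h1, h2, by linarith, h4, by linarith, h6, by linarith⟩
  have hεb : ∀ p ∈ K, ε ≤ p.1 ∧ ε ≤ p.2.1 ∧ ε ≤ 1 - p.1 - p.2.1 ∧ ε ≤ p.2.2.1 ∧
      p.2.2.1 ≤ 1 - ε ∧ ε ≤ p.2.2.2 ∧ p.2.2.2 ≤ 1 - ε := by
    intro p hp
    have h := isMinOn_iff.mp hq p hp
    rw [← hεdef] at h
    simp only [le_min_iff] at h
    exact ⟨h.1, h.2.1, h.2.2.1, h.2.2.2.1, by linarith [h.2.2.2.2.1], h.2.2.2.2.2.1,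
      by linarith [h.2.2.2.2.2.2]⟩
  -- beta function bounds
  have hcl : ContinuousOn (fun p => betaFn p.2.2.1 γl) K :=
    betaFn_contOn γl (by linarith) (fun p hp => (hreg p hp).2.2.2.1)
  have hcr : ContinuousOn (fun p => betaFn γr p.2.2.2) K :=
    betaFn_contOn' γr (by linarith) (fun p hp => (hreg p hp).2.2.2.2.2.1)
  obtain ⟨qC, hqCK, hqC⟩ := hK.exists_isMaxOn hne
    (fun x hx => ((hcl x hx).max (hcr x hx) : ContinuousWithinAt
      (fun p => max (betaFn p.2.2.1 γl) (betaFn γr p.2.2.2)) K x))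
  obtain ⟨qc, hqcK, hqc⟩ := hK.exists_isMinOn hne
    (fun x hx => ((hcl x hx).min (hcr x hx) : ContinuousWithinAt
      (fun p => min (betaFn p.2.2.1 γl) (betaFn γr p.2.2.2)) K x))
  obtain ⟨C, hCdef⟩ : ∃ C : ℝ, C = max (betaFn qC.2.2.1 γl) (betaFn γr qC.2.2.2) := ⟨_, rfl⟩
  obtain ⟨c, hcdef⟩ : ∃ c : ℝ, c = min (betaFn qc.2.2.1 γl) (betaFn γr qc.2.2.2) := ⟨_, rfl⟩
  have hcpos : 0 < c := by
    obtain ⟨_, _, _, h4, _, h6, _⟩ := hreg qc hqcK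
    rw [hcdef]
    exact lt_min (betaFn_pos h4 (by linarith)) (betaFn_pos (by linarith) h6)
  have hBlC : ∀ p ∈ K, betaFn p.2.2.1 γl ≤ C := fun p hp =>
    le_trans (le_max_left _ _) (hCdef ▸ isMaxOn_iff.mp hqC p hp)
  have hBrC : ∀ p ∈ K, betaFn γr p.2.2.2 ≤ C := fun p hp =>
    le_trans (le_max_right _ _) (hCdef ▸ isMaxOn_iff.mp hqC p hp)
  have hcBl : ∀ p ∈ K, c ≤ betaFn p.2.2.1 γl := fun p hp =>
    le_trans (hcdef ▸ isMinOn_iff.mp hqc p hp) (min_le_left _ _)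
  have hcBr : ∀ p ∈ K, c ≤ betaFn γr p.2.2.2 := fun p hp =>
    le_trans (hcdef ▸ isMinOn_iff.mp hqc p hp) (min_le_right _ _)
  have hCpos : 0 < C := lt_of_lt_of_le hcpos (le_trans (hcBl q hqK) (hBlC q hqK))
  -- constants
  obtain ⟨M, hMdef⟩ : ∃ M : ℝ, M = 1 + 4 / (c * ε) := ⟨_, rfl⟩
  have hMpos : 0 < M := by rw [hMdef]; positivity
  have hM1 : 1 ≤ M := by
    rw [hMdef]
    have : 0 ≤ 4 / (c * ε) := by positivity
    linarith
  have h2gl : (0:ℝ) < (2:ℝ) ^ (γl - 1) := Real.rpow_pos_of_pos (by norm_num) _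
  have h2gr : (0:ℝ) < (2:ℝ) ^ (γr - 1) := Real.rpow_pos_of_pos (by norm_num) _
  obtain ⟨T, hTdef⟩ : ∃ T : ℝ,
    T = max 1 (M * C / ε * ((2:ℝ) ^ (γl - 1) + (2:ℝ) ^ (γr - 1))) := ⟨_, rfl⟩
  have hTpos : 0 < T := lt_of_lt_of_le one_pos (hTdef ▸ le_max_left _ _)
  obtain ⟨u0, hu0def⟩ : ∃ u0 : ℝ, u0 = min (1/4) (T ^ (-(1/ε))) := ⟨_, rfl⟩
  have hu0pos : 0 < u0 := hu0def ▸ lt_min (by norm_num) (Real.rpow_pos_of_pos hTpos _)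
  have hu0lt : u0 ≤ 1/4 := hu0def ▸ min_le_left _ _
  have hu0T : T ≤ u0 ^ (-ε) := by
    have ha : u0 ≤ T ^ (-(1/ε)) := hu0def ▸ min_le_right _ _
    have h1 : u0 ^ ε ≤ (T ^ (-(1/ε))) ^ ε := Real.rpow_le_rpow hu0pos.le ha hε.le
    have h2 : (T ^ (-(1/ε))) ^ ε = T⁻¹ := by
      rw [← Real.rpow_mul hTpos.le]
      rw [show (-(1/ε) * ε) = (-1 : ℝ) by field_simp]
      exact Real.rpow_neg_one T
    rw [h2] at h1
    rw [Real.rpow_neg hu0pos.le]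
    calc T = (T⁻¹)⁻¹ := (inv_inv T).symm
      _ ≤ (u0 ^ ε)⁻¹ := inv_anti₀ (Real.rpow_pos_of_pos hu0pos ε) h1
  -- threshold chain: T gives the lower bound needed on u^(-ε)
  have hTl : M * C / ε * (2:ℝ) ^ (γl - 1) ≤ T := by
    rw [hTdef]
    refine le_trans ?_ (le_max_right _ _)
    have h0 : 0 ≤ M * C / ε := by positivity
    nlinarith [h2gr, h0]
  have hTr : M * C / ε * (2:ℝ) ^ (γr - 1) ≤ T := by
    rw [hTdef]
    refine le_trans ?_ (le_max_right _ _)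
    have h0 : 0 ≤ M * C / ε := by positivity
    nlinarith [h2gl, h0]
  -- bound at 1/2
  have key_mid : ∀ p ∈ K, bAssessor γl γr p (1/2) ≤ M := by
    intro p hp
    obtain ⟨e1, e2, e3, e4, e5, e6, e7⟩ := hεb p hp
    obtain ⟨r1, r2, r3, r4, r5, r6, r7⟩ := hreg p hp
    have hBl : 0 < betaFn p.2.2.1 γl := betaFn_pos r4 (by linarith)
    have hBr : 0 < betaFn γr p.2.2.2 := betaFn_pos (by linarith) r6
    have hcl' := hcBl p hp
    have hcr' := hcBr p hp
    unfold bAssessor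
    have h1m : (1:ℝ) - 1/2 = 1/2 := by norm_num
    have hgl1 : ((1:ℝ) - 1/2) ^ (γl - 1) ≤ 1 :=
      Real.rpow_le_one (by norm_num) (by norm_num) (by linarith)
    have ht1 : p.1 * (betaFn p.2.2.1 γl)⁻¹ * ((1:ℝ)/2) ^ (p.2.2.1 - 1)
        * ((1:ℝ) - 1/2) ^ (γl - 1) ≤ 2 / c := by
      have hb : (betaFn p.2.2.1 γl)⁻¹ ≤ c⁻¹ := inv_anti₀ hcpos hcl'
      calc p.1 * (betaFn p.2.2.1 γl)⁻¹ * ((1:ℝ)/2) ^ (p.2.2.1 - 1) * ((1:ℝ) - 1/2) ^ (γl - 1)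
          ≤ 1 * c⁻¹ * 2 * 1 := by
            apply mul_le_mul
            apply mul_le_mul
            apply mul_le_mul (by linarith) hb (by positivity) (by norm_num)
            · exact half_rpow_le_two r4.le
            · positivity
            · positivity
            · exact hgl1
            · rw [h1m]; positivity
            · positivity
        _ = 2 / c := by ring
    have ht2 : p.2.1 * (betaFn γr p.2.2.2)⁻¹ * ((1:ℝ)/2) ^ (γr - 1)
        * ((1:ℝ) - 1/2) ^ (p.2.2.2 - 1) ≤ 2 / c := by
      have hb : (betaFn γr p.2.2.2)⁻¹ ≤ c⁻¹ := inv_anti₀ hcpos hcr'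
      have hgr1' : ((1:ℝ)/2) ^ (γr - 1) ≤ 1 :=
        Real.rpow_le_one (by norm_num) (by norm_num) (by linarith)
      have hh2 : ((1:ℝ) - 1/2) ^ (p.2.2.2 - 1) ≤ 2 := by rw [h1m]; exact half_rpow_le_two r6.le
      calc p.2.1 * (betaFn γr p.2.2.2)⁻¹ * ((1:ℝ)/2) ^ (γr - 1) * ((1:ℝ) - 1/2) ^ (p.2.2.2 - 1)
          ≤ 1 * c⁻¹ * 1 * 2 := by
            apply mul_le_mul
            apply mul_le_mul
            apply mul_le_mul (by linarith) hb (by positivity) (by norm_num)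
            · exact hgr1'
            · positivity
            · positivity
            · exact hh2
            · rw [h1m]; positivity
            · positivity
        _ = 2 / c := by ring
    have hsum : p.1 * (betaFn p.2.2.1 γl)⁻¹ * ((1:ℝ)/2) ^ (p.2.2.1 - 1)
        * ((1:ℝ) - 1/2) ^ (γl - 1)
        + p.2.1 * (betaFn γr p.2.2.2)⁻¹ * ((1:ℝ)/2) ^ (γr - 1)
        * ((1:ℝ) - 1/2) ^ (p.2.2.2 - 1) ≤ 4 / c := by
      calc _ ≤ 2 / c + 2 / c := add_le_add ht1 ht2
        _ = 4 / c := by ring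
    have hdiv : (p.1 * (betaFn p.2.2.1 γl)⁻¹ * ((1:ℝ)/2) ^ (p.2.2.1 - 1)
        * ((1:ℝ) - 1/2) ^ (γl - 1)
        + p.2.1 * (betaFn γr p.2.2.2)⁻¹ * ((1:ℝ)/2) ^ (γr - 1)
        * ((1:ℝ) - 1/2) ^ (p.2.2.2 - 1)) / (1 - p.1 - p.2.1) ≤ (4 / c) / ε :=
      div_le_div₀ (by positivity) hsum hε e3
    have heq : (4:ℝ) / c / ε = 4 / (c * ε) := by rw [div_div]
    rw [hMdef]
    rw [heq] at hdiv
    linarith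
  -- lower bound: blow-up near 0
  have key_low : ∀ p ∈ K, ∀ u : ℝ, 0 < u → u ≤ u0 → 1 + M ≤ bAssessor γl γr p u := by
    intro p hp u hu huu0
    obtain ⟨e1, e2, e3, e4, e5, e6, e7⟩ := hεb p hp
    obtain ⟨r1, r2, r3, r4, r5, r6, r7⟩ := hreg p hp
    have hBl : 0 < betaFn p.2.2.1 γl := betaFn_pos r4 (by linarith)
    have hBr : 0 < betaFn γr p.2.2.2 := betaFn_pos (by linarith) r6
    have hu1 : u ≤ 1 := by linarith [hu0lt]
    have h1upos : 0 < 1 - u := by linarith [hu0lt]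
    have h1uhalf : (1:ℝ)/2 ≤ 1 - u := by linarith [hu0lt]
    have ht2 : 0 ≤ p.2.1 * (betaFn γr p.2.2.2)⁻¹ * u ^ (γr - 1) * (1 - u) ^ (p.2.2.2 - 1) := by
      apply mul_nonneg
      apply mul_nonneg
      apply mul_nonneg r2.le (inv_nonneg.2 hBr.le)
      · exact (Real.rpow_pos_of_pos hu _).le
      · exact (Real.rpow_pos_of_pos h1upos _).le
    have ht1 : M ≤ p.1 * (betaFn p.2.2.1 γl)⁻¹ * u ^ (p.2.2.1 - 1) * (1 - u) ^ (γl - 1) := by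
      have f2 : C⁻¹ ≤ (betaFn p.2.2.1 γl)⁻¹ := inv_anti₀ hBl (hBlC p hp)
      have f3 : u ^ (-ε) ≤ u ^ (p.2.2.1 - 1) :=
        Real.rpow_le_rpow_of_exponent_ge hu hu1 (by linarith)
      have f5 : u0 ^ (-ε) ≤ u ^ (-ε) := by
        rw [Real.rpow_neg hu.le, Real.rpow_neg hu0pos.le]
        exact inv_anti₀ (Real.rpow_pos_of_pos hu _)
          (Real.rpow_le_rpow hu.le huu0 hε.le)
      have f6 : M * C / ε * (2:ℝ) ^ (γl - 1) ≤ u ^ (p.2.2.1 - 1) :=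
        le_trans (le_trans (le_trans hTl hu0T) f5) f3
      have f4 : ((1:ℝ)/2) ^ (γl - 1) ≤ (1 - u) ^ (γl - 1) :=
        Real.rpow_le_rpow (by norm_num) h1uhalf (by linarith)
      have h2ne : ((2:ℝ) ^ (γl - 1)) ≠ 0 := h2gl.ne'
      calc M = ε * C⁻¹ * (M * C / ε * (2:ℝ) ^ (γl - 1)) * ((1:ℝ)/2) ^ (γl - 1) := by
            rw [one_div, Real.inv_rpow (by norm_num : (0:ℝ) ≤ 2)]
            field_simp
        _ ≤ p.1 * (betaFn p.2.2.1 γl)⁻¹ * u ^ (p.2.2.1 - 1) * (1 - u) ^ (γl - 1) := by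
            apply mul_le_mul
            apply mul_le_mul
            apply mul_le_mul e1 f2 (by positivity) r1.le
            · exact f6
            · positivity
            · positivity
            · exact f4
            · positivity
            · positivity
    have hdpos : 0 < 1 - p.1 - p.2.1 := by linarith
    have hd1 : 1 - p.1 - p.2.1 ≤ 1 := by linarith
    have hnum : M ≤ p.1 * (betaFn p.2.2.1 γl)⁻¹ * u ^ (p.2.2.1 - 1) * (1 - u) ^ (γl - 1)
        + p.2.1 * (betaFn γr p.2.2.2)⁻¹ * u ^ (γr - 1) * (1 - u) ^ (p.2.2.2 - 1) := by
      linarith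
    have hfrac : p.1 * (betaFn p.2.2.1 γl)⁻¹ * u ^ (p.2.2.1 - 1) * (1 - u) ^ (γl - 1)
        + p.2.1 * (betaFn γr p.2.2.2)⁻¹ * u ^ (γr - 1) * (1 - u) ^ (p.2.2.2 - 1)
        ≤ (p.1 * (betaFn p.2.2.1 γl)⁻¹ * u ^ (p.2.2.1 - 1) * (1 - u) ^ (γl - 1)
        + p.2.1 * (betaFn γr p.2.2.2)⁻¹ * u ^ (γr - 1) * (1 - u) ^ (p.2.2.2 - 1))
        / (1 - p.1 - p.2.1) := by
      rw [le_div_iff₀ hdpos]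
      apply mul_le_of_le_one_right (by linarith) hd1
    unfold bAssessor
    linarith
  -- lower bound: blow-up near 1
  have key_high : ∀ p ∈ K, ∀ u : ℝ, 1 - u0 ≤ u → u < 1 → 1 + M ≤ bAssessor γl γr p u := by
    intro p hp u huu0 hu1
    obtain ⟨e1, e2, e3, e4, e5, e6, e7⟩ := hεb p hp
    obtain ⟨r1, r2, r3, r4, r5, r6, r7⟩ := hreg p hp
    have hBl : 0 < betaFn p.2.2.1 γl := betaFn_pos r4 (by linarith)
    have hBr : 0 < betaFn γr p.2.2.2 := betaFn_pos (by linarith) r6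
    have hupos : 0 < u := by linarith [hu0lt]
    have huhalf : (1:ℝ)/2 ≤ u := by linarith [hu0lt]
    have h1upos : 0 < 1 - u := by linarith
    have h1u1 : 1 - u ≤ 1 := by linarith
    have h1uu0 : 1 - u ≤ u0 := by linarith
    have ht1 : 0 ≤ p.1 * (betaFn p.2.2.1 γl)⁻¹ * u ^ (p.2.2.1 - 1) * (1 - u) ^ (γl - 1) := by
      apply mul_nonneg
      apply mul_nonneg
      apply mul_nonneg r1.le (inv_nonneg.2 hBl.le)
      · exact (Real.rpow_pos_of_pos hupos _).le
      · exact (Real.rpow_pos_of_pos h1upos _).le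
    have ht2 : M ≤ p.2.1 * (betaFn γr p.2.2.2)⁻¹ * u ^ (γr - 1) * (1 - u) ^ (p.2.2.2 - 1) := by
      have f2 : C⁻¹ ≤ (betaFn γr p.2.2.2)⁻¹ := inv_anti₀ hBr (hBrC p hp)
      have f3 : (1 - u) ^ (-ε) ≤ (1 - u) ^ (p.2.2.2 - 1) :=
        Real.rpow_le_rpow_of_exponent_ge h1upos h1u1 (by linarith)
      have f5 : u0 ^ (-ε) ≤ (1 - u) ^ (-ε) := by
        rw [Real.rpow_neg h1upos.le, Real.rpow_neg hu0pos.le]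
        exact inv_anti₀ (Real.rpow_pos_of_pos h1upos _)
          (Real.rpow_le_rpow h1upos.le h1uu0 hε.le)
      have f6 : M * C / ε * (2:ℝ) ^ (γr - 1) ≤ (1 - u) ^ (p.2.2.2 - 1) :=
        le_trans (le_trans (le_trans hTr hu0T) f5) f3
      have f4 : ((1:ℝ)/2) ^ (γr - 1) ≤ u ^ (γr - 1) :=
        Real.rpow_le_rpow (by norm_num) huhalf (by linarith)
      have h2ne : ((2:ℝ) ^ (γr - 1)) ≠ 0 := h2gr.ne'
      calc M = ε * C⁻¹ * ((1:ℝ)/2) ^ (γr - 1) * (M * C / ε * (2:ℝ) ^ (γr - 1)) := by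
            rw [one_div, Real.inv_rpow (by norm_num : (0:ℝ) ≤ 2)]
            field_simp
        _ ≤ p.2.1 * (betaFn γr p.2.2.2)⁻¹ * u ^ (γr - 1) * (1 - u) ^ (p.2.2.2 - 1) := by
            apply mul_le_mul
            apply mul_le_mul
            apply mul_le_mul e2 f2 (by positivity) r2.le
            · exact f4
            · positivity
            · positivity
            · exact f6
            · positivity
            · positivity
    have hdpos : 0 < 1 - p.1 - p.2.1 := by linarith
    have hd1 : 1 - p.1 - p.2.1 ≤ 1 := by linarith
    have hfrac : p.1 * (betaFn p.2.2.1 γl)⁻¹ * u ^ (p.2.2.1 - 1) * (1 - u) ^ (γl - 1)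
        + p.2.1 * (betaFn γr p.2.2.2)⁻¹ * u ^ (γr - 1) * (1 - u) ^ (p.2.2.2 - 1)
        ≤ (p.1 * (betaFn p.2.2.1 γl)⁻¹ * u ^ (p.2.2.1 - 1) * (1 - u) ^ (γl - 1)
        + p.2.1 * (betaFn γr p.2.2.2)⁻¹ * u ^ (γr - 1) * (1 - u) ^ (p.2.2.2 - 1))
        / (1 - p.1 - p.2.1) := by
      rw [le_div_iff₀ hdpos]
      apply mul_le_of_le_one_right (by linarith) hd1
    unfold bAssessor
    linarith
  -- conclusion
  refine ⟨u0, ⟨hu0pos, by linarith [hu0lt]⟩, ?_⟩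
  intro p hp ustar hust hmin
  obtain ⟨hu1, hu2⟩ := hust
  by_contra hcon
  rw [Set.mem_Icc] at hcon
  push_neg at hcon
  have hM := key_mid p hp
  have hhalf : (1/2:ℝ) ∈ Set.Ioo (0:ℝ) 1 := by norm_num
  rcases lt_or_ge ustar u0 with hlt | hge
  · have hb := key_low p hp ustar hu1 hlt.le
    have hne : (1/2:ℝ) ≠ ustar := by
      intro h
      rw [← h] at hlt
      linarith [hu0lt]
    have := hmin (1/2) hhalf hne
    linarith
  · have h2 := hcon hge
    have hb := key_high p hp ustar (by linarith) hu2
    have hne : (1/2:ℝ) ≠ ustar := by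
      intro h
      rw [← h] at h2
      linarith [hu0lt]
    have := hmin (1/2) hhalf hne
    linarith
end
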